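/- arXiv:1512.02781 — 10 statements merged into one kernel-verified Lean document; each statement's English description precedes it below -/
import Mathlib

section
/- Let N ≥ 2 and M = N(N−1)/2, and let μ⁽¹⁾ ∈ ℝ^N be a vector with pairwise distinct entries. Then there exist vectors μ⁽²⁾, …, μ⁽ᴹ⁾ ∈ ℝ^N such that the M×M real matrix G, whose rows are indexed by i ∈ {1,…,M} and whose columns are indexed by pairs (j,k) with 1 ≤ j < k ≤ N, with entries G_{i,(j,k)} = (μ⁽ⁱ⁾_j − μ⁽ⁱ⁾_k)², is invertible. -/
/-!
Polarizing the quadratic map `w ↦ ((w j - w k) ^ 2)_{j<k}` at two coordinate vectors `e_a`, `e_b`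
with `a < b` gives `-2` times the indicator of the pair `(a, b)`, so squared-difference vectors span
the whole space of functions on pairs. Extending the nonzero vector of `μ₁` to a basis chosen among
them yields `M` squared-difference vectors that span, and a square matrix whose rows span is
invertible.
-/

open Matrix Module Submodule Set

section SquaredDifferences

variable {ι K : Type*} [LinearOrder ι] [Field K]

def sqDiffs (w : ι → K) : {jk : ι × ι // jk.1 < jk.2} → K :=
  fun jk => (w jk.1.1 - w jk.1.2) ^ 2

theorem sqDiffs_ne_zero [Nontrivial ι] {w : ι → K} (hw : Function.Injective w) :
    sqDiffs w ≠ 0 := by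
  obtain ⟨a, b, hab⟩ := exists_pair_lt ι
  intro h
  have := congrFun h ⟨(a, b), hab⟩
  simp only [sqDiffs, Pi.zero_apply, pow_eq_zero_iff two_ne_zero, sub_eq_zero] at this
  exact hab.ne (hw this)

theorem sqDiffs_single_add_single [DecidableEq ι] {a b : ι} (hab : a < b) :
    sqDiffs (Pi.single a 1 + Pi.single b 1 : ι → K) - sqDiffs (Pi.single a 1)
      - sqDiffs (Pi.single b 1) = (-2 : K) • Pi.single ⟨(a, b), hab⟩ 1 := by
  funext ⟨⟨j, k⟩, hjk⟩
  simp only [sqDiffs, Pi.sub_apply, Pi.add_apply, Pi.smul_apply, Pi.single_apply,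
    Subtype.mk.injEq, Prod.mk.injEq, smul_eq_mul]
  split_ifs <;> grind

theorem span_range_sqDiffs [Finite ι] [NeZero (2 : K)] :
    span K (range (sqDiffs (ι := ι) (K := K))) = ⊤ := by
  classical
  rw [eq_top_iff, ← (Pi.basisFun K _).span_eq, span_le]
  rintro - ⟨⟨⟨a, b⟩, hab⟩, rfl⟩
  have hsingle : Pi.basisFun K _ ⟨(a, b), hab⟩ = (-2 : K)⁻¹ • (sqDiffs (Pi.single a 1 +
      Pi.single b 1) - sqDiffs (Pi.single a 1) - sqDiffs (Pi.single b 1)) := by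
    rw [sqDiffs_single_add_single, inv_smul_smul₀ (neg_ne_zero.mpr two_ne_zero),
      Pi.basisFun_apply]
  rw [hsingle]
  refine smul_mem _ _ (sub_mem (sub_mem ?_ ?_) ?_) <;> exact subset_span (mem_range_self _)

end SquaredDifferences

theorem Matrix.mulVec_bijective_of_span_row_eq_top {m n K : Type*} [Fintype m] [Fintype n]
    [Field K] {A : Matrix m n K} (hcard : Fintype.card m = Fintype.card n)
    (hA : span K (range A.row) = ⊤) : Function.Bijective A.mulVec := by
  have hrank : finrank K (LinearMap.range A.mulVecLin) = finrank K (m → K) := by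
    rw [← Matrix.rank, rank_eq_finrank_span_row, hA, finrank_top, finrank_fintype_fun_eq_card,
      finrank_fintype_fun_eq_card, hcard]
  have hsurj : Function.Surjective A.mulVecLin :=
    LinearMap.range_eq_top.mp (eq_top_of_finrank_eq hrank)
  have hdim : finrank K (n → K) = finrank K (m → K) := by
    simp only [finrank_fintype_fun_eq_card, hcard]
  exact ⟨(LinearMap.injective_iff_surjective_of_finrank_eq_finrank hdim).mpr hsurj, hsurj⟩

theorem exists_spanning_subfamily_of_card_eq_finrank {K V α ι : Type*} [Field K]
    [AddCommGroup V] [Module K V] [Fintype ι] {f : α → V} (hf : span K (range f) = ⊤)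
    (hcard : Fintype.card ι = finrank K V) {a : α} (ha : f a ≠ 0) (i₀ : ι) :
    ∃ g : ι → α, g i₀ = a ∧ span K (range (f ∘ g)) = ⊤ := by
  classical
  have : Module.Finite K V :=
    Module.finite_of_finrank_pos (hcard ▸ Fintype.card_pos_iff.mpr ⟨i₀⟩)
  have hindep : LinearIndepOn K f {a} := (linearIndepOn_singleton_iff K).mpr ha
  set B := hindep.extend (subset_univ _)
  have haB : a ∈ B := hindep.subset_extend _ rfl
  have hspan : span K (range fun b : B => f b) = ⊤ := by
    rw [← image_eq_range, hindep.span_image_extend_eq_span_image, image_univ, hf]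
  let b := Basis.mk (hindep.linearIndepOn_extend _) hspan.ge
  have : Finite B := Module.Finite.finite_basis b
  let e : ι ≃ B := (Fintype.equivFin ι).trans
    (Finite.equivFinOfCardEq (by rw [← finrank_eq_nat_card_basis b, hcard])).symm
  let e' : ι ≃ B := e.trans (Equiv.swap (e i₀) ⟨a, haB⟩)
  refine ⟨fun i => e' i, by simp [e'], ?_⟩
  rw [← hspan, ← e'.surjective.range_comp]
  rfl

/-- Given a vector `μ₁ ∈ ℝ^N` with pairwise distinct entries, the family of commuting
operators can be completed so that the `M × M` coefficient matrix
`G_{i,(j,k)} = (μ⁽ⁱ⁾_j − μ⁽ⁱ⁾_k)²` (rows indexed by `i ∈ {1,…,M}`, columns by pairs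
`j < k`, where `M = N(N−1)/2`) is invertible. -/
theorem exists_invertible_coefficient_matrix
    (N M : ℕ) (hN : 2 ≤ N) (hM : M = N * (N - 1) / 2)
    (μ₁ : Fin N → ℝ) (hμ₁ : Function.Injective μ₁) :
    ∃ μ : Fin M → Fin N → ℝ,
      (∀ h : 0 < M, μ ⟨0, h⟩ = μ₁) ∧
      Function.Bijective (fun x : {jk : Fin N × Fin N // jk.1 < jk.2} → ℝ =>
        (Matrix.of fun (i : Fin M) (jk : {jk : Fin N × Fin N // jk.1 < jk.2}) =>
          (μ i jk.1.1 - μ i jk.1.2) ^ 2).mulVec x) := by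
  have : Nontrivial (Fin N) := Fin.nontrivial_iff_two_le.mpr hN
  have hcard : Fintype.card (Fin M) = Fintype.card {jk : Fin N × Fin N // jk.1 < jk.2} := by
    rw [Fintype.card_subtype, Fintype.card_product_filter_lt, Fintype.card_fin,
      Fintype.card_fin, Nat.choose_two_right, hM]
  have hM₀ : 0 < M := by
    obtain ⟨a, b, hab⟩ := exists_pair_lt (Fin N)
    rw [← Fintype.card_fin M, hcard]
    exact Fintype.card_pos_iff.mpr ⟨⟨(a, b), hab⟩⟩
  obtain ⟨μ, hμ₀, hspan⟩ := exists_spanning_subfamily_of_card_eq_finrank span_range_sqDiffs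
    (hcard.trans (finrank_fintype_fun_eq_card ℝ).symm) (sqDiffs_ne_zero hμ₁) ⟨0, hM₀⟩
  exact ⟨μ, fun _ => hμ₀, mulVec_bijective_of_span_row_eq_top hcard hspan⟩
end

section
/- Let ρ be an N×N density matrix and A an N×N Hermitian matrix with N pairwise distinct real eigenvalues λ_1, …, λ_N and corresponding orthonormal eigenbasis |1⟩, …, |N⟩. Let p_m = ⟨m|ρ|m⟩, let ℓ_j(x) = ∏_{m≠j} (x − λ_m)/(λ_j − λ_m) be the Lagrange basis polynomials, and define Ω_{ij} = −cov(ℓ_i, ℓ_j) = −( Tr[ρ ℓ_i(A)ℓ_j(A)] − Tr[ρ ℓ_i(A)] · Tr[ρ ℓ_j(A)] ) for i ≠ j. Then for any pairwise distinct indices i, j, k with p_j > 0 and p_k > 0 (so Ω_{jk} ≠ 0), one has p_i² = Ω_{ij} Ω_{ik} / Ω_{jk}. -/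
open Matrix ComplexOrder Polynomial

/-- Proposition 1: for a non-degenerate observable `A` with eigenvalues `λ` and
orthonormal eigenbasis `v`, the measurement probabilities satisfy
`p_i² = Ω_{ij} Ω_{ik} / Ω_{jk}` where `Ω_{ij} = −cov(ℓ_i, ℓ_j)` are the (negated)
covariances of the Lagrange basis polynomials of `A`. -/
theorem prob_sq_eq_cov_ratio
    (N : ℕ) (ρ A : Matrix (Fin N) (Fin N) ℂ)
    (hρ : ρ.PosSemidef) (hρtr : ρ.trace = 1)
    (lam : Fin N → ℝ) (hlam : Function.Injective lam)
    (v : Fin N → Fin N → ℂ)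
    (hv : ∀ i j, star (v i) ⬝ᵥ v j = if i = j then 1 else 0)
    (hA : A = ∑ j, (lam j : ℂ) • vecMulVec (v j) (star (v j)))
    (p : Fin N → ℝ)
    (hp : ∀ m, star (v m) ⬝ᵥ ρ *ᵥ v m = (p m : ℂ))
    (Ω : Fin N → Fin N → ℂ)
    (hΩ : ∀ i j, Ω i j =
      -((ρ * (aeval A (Lagrange.basis Finset.univ (fun m => (lam m : ℂ)) i) *
              aeval A (Lagrange.basis Finset.univ (fun m => (lam m : ℂ)) j))).trace -
        (ρ * aeval A (Lagrange.basis Finset.univ (fun m => (lam m : ℂ)) i)).trace *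
        (ρ * aeval A (Lagrange.basis Finset.univ (fun m => (lam m : ℂ)) j)).trace))
    (i j k : Fin N) (hij : i ≠ j) (hik : i ≠ k) (hjk : j ≠ k)
    (hpj : 0 < p j) (hpk : 0 < p k) :
    (p i : ℂ) ^ 2 = Ω i j * Ω i k / Ω j k := by
  classical
  set lc : Fin N → ℂ := fun m => (lam m : ℂ) with hlc
  have hlc_inj : Function.Injective lc := by
    intro a b h
    exact hlam (Complex.ofReal_injective h)
  set P : Fin N → Matrix (Fin N) (Fin N) ℂ :=
    fun m => vecMulVec (v m) (star (v m)) with hPdef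
  -- products of projectors
  have hPmul : ∀ m n, P m * P n = if m = n then P m else 0 := by
    intro m n
    have hmn := hv m n
    simp only [dotProduct, Pi.star_apply] at hmn
    ext a b
    simp only [hPdef, mul_apply, vecMulVec_apply, Pi.star_apply]
    have : ∀ c, v m a * star (v m c) * (v n c * star (v n b)) =
        v m a * star (v n b) * (star (v m c) * v n c) := fun c => by ring
    rw [Finset.sum_congr rfl (fun c _ => this c), ← Finset.mul_sum, hmn]
    by_cases h : m = n
    · subst h; simp [vecMulVec_apply]
    · simp [h, if_neg h]
  -- completeness
  have hPsum : ∑ m, P m = (1 : Matrix (Fin N) (Fin N) ℂ) := by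
    set U : Matrix (Fin N) (Fin N) ℂ := Matrix.of fun a b => v b a with hU
    have h1 : Uᴴ * U = 1 := by
      ext a b
      have := hv a b
      simp only [dotProduct, Pi.star_apply] at this
      simp only [mul_apply, conjTranspose_apply, hU, Matrix.of_apply, one_apply]
      simpa using this
    have h2 : U * Uᴴ = 1 := mul_eq_one_comm.mp h1
    calc ∑ m, P m = U * Uᴴ := by
          ext a b
          simp only [Matrix.sum_apply, hPdef, vecMulVec_apply, Pi.star_apply,
            mul_apply, conjTranspose_apply, hU, Matrix.of_apply]
      _ = 1 := h2
  -- powers of A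
  have hApow : ∀ n : ℕ, A ^ n = ∑ m, lc m ^ n • P m := by
    intro n
    induction n with
    | zero => simp [hPsum]
    | succ n ih =>
      rw [pow_succ, ih, hA]
      rw [Finset.sum_mul_sum]
      have key : ∀ m l, (lc m ^ n • P m) * (lc l • vecMulVec (v l) (star (v l))) =
          if m = l then lc m ^ (n + 1) • P m else 0 := by
        intro m l
        rw [Matrix.smul_mul, Matrix.mul_smul]
        have : P m * vecMulVec (v l) (star (v l)) = P m * P l := rfl
        rw [this, hPmul]
        by_cases h : m = l
        · subst h; simp [smul_smul, pow_succ, mul_comm]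
        · simp [h]
      rw [Finset.sum_congr rfl fun m _ => Finset.sum_congr rfl fun l _ => key m l]
      apply Finset.sum_congr rfl
      intro m _
      simp
  -- polynomial functional calculus
  have haeval : ∀ f : ℂ[X], aeval A f = ∑ m, f.eval (lc m) • P m := by
    intro f
    induction f using Polynomial.induction_on' with
    | add f g hf hg =>
      rw [map_add, hf, hg, ← Finset.sum_add_distrib]
      apply Finset.sum_congr rfl
      intro m _
      rw [eval_add, add_smul]
    | monomial n a =>
      rw [aeval_monomial]
      simp only [eval_monomial]
      rw [hApow n, Algebra.algebraMap_eq_smul_one, Matrix.smul_mul, one_mul,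
        Finset.smul_sum]
      apply Finset.sum_congr rfl
      intro m _
      rw [smul_smul]
  -- Lagrange basis polynomials evaluate to projectors
  have hLag : ∀ m : Fin N, aeval A (Lagrange.basis Finset.univ lc m) = P m := by
    intro m
    rw [haeval]
    have : ∀ l : Fin N, (Lagrange.basis Finset.univ lc m).eval (lc l) =
        if m = l then 1 else 0 := by
      intro l
      by_cases h : m = l
      · subst h
        simp [Lagrange.eval_basis_self (hlc_inj.injOn) (Finset.mem_univ m)]
      · simp [h, Lagrange.eval_basis_of_ne h (Finset.mem_univ l)]
    rw [Finset.sum_congr rfl fun l _ => by rw [this l]]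
    simp
  -- traces
  have htr : ∀ m, (ρ * P m).trace = (p m : ℂ) := by
    intro m
    have h := hp m
    simp only [dotProduct, mulVec, Pi.star_apply] at h
    rw [trace]
    simp only [diag_apply, mul_apply, hPdef, vecMulVec_apply, Pi.star_apply]
    rw [← h]
    apply Finset.sum_congr rfl
    intro a _
    rw [Finset.mul_sum]
    apply Finset.sum_congr rfl
    intro c _
    ring
  have hΩval : ∀ m n, m ≠ n → Ω m n = (p m : ℂ) * (p n : ℂ) := by
    intro m n hmn
    rw [hΩ m n]
    have : (Lagrange.basis Finset.univ (fun m => (lam m : ℂ)) m) =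
        Lagrange.basis Finset.univ lc m := rfl
    rw [this]
    rw [show (Lagrange.basis Finset.univ (fun m => (lam m : ℂ)) n) =
        Lagrange.basis Finset.univ lc n from rfl]
    rw [hLag m, hLag n, hPmul m n, if_neg hmn, mul_zero, Matrix.trace_zero,
      htr m, htr n]
    ring
  have hpj' : (p j : ℂ) ≠ 0 := by exact_mod_cast hpj.ne'
  have hpk' : (p k : ℂ) ≠ 0 := by exact_mod_cast hpk.ne'
  rw [hΩval i j hij, hΩval i k hik, hΩval j k hjk]
  field_simp
end

section
/- Let ρ be a 2×2 density matrix and A a 2×2 Hermitian matrix with Tr A = 0 and A² = I, with orthonormal eigenvectors |1⟩, |2⟩ and probabilities p_j = ⟨j|ρ|j⟩. Let ΔA² = Tr[ρA²] − (Tr[ρA])². Then for every real α > 0 with α ≠ 1, the Rényi entropy satisfies H_α(A) := (1/(1−α)) · ln(p_1^α + p_2^α) = (1/(1−α)) · ln(a_+^α + a_-^α), where a_± = (1 ± √(1 − ΔA²))/2. In a qubit system the entropy of an observable is a function of its variance alone. -/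
open Matrix ComplexOrder

lemma aux_trace_basis (M : Matrix (Fin 2) (Fin 2) ℂ)
    (v : Fin 2 → Fin 2 → ℂ)
    (hv : ∀ i j, star (v i) ⬝ᵥ v j = if i = j then 1 else 0) :
    M.trace = ∑ j, star (v j) ⬝ᵥ M *ᵥ v j := by
  set U : Matrix (Fin 2) (Fin 2) ℂ := Matrix.of fun i j => v j i with hU
  have h1 : Uᴴ * U = 1 := by
    ext i j
    have := hv i j
    simpa [Matrix.mul_apply, Matrix.conjTranspose_apply, dotProduct, hU,
      Matrix.one_apply] using this
  have h2 : U * Uᴴ = 1 := mul_eq_one_comm.mp h1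
  have htr : (Uᴴ * M * U).trace = M.trace := by
    rw [Matrix.trace_mul_comm, ← Matrix.mul_assoc, h2, Matrix.one_mul]
  rw [← htr, Matrix.trace]
  congr 1
  ext j
  simp only [Matrix.diag_apply, Matrix.mul_apply, Matrix.conjTranspose_apply,
    dotProduct, Matrix.mulVec, hU, Matrix.of_apply, Finset.sum_mul,
    Finset.mul_sum, Pi.star_apply]
  rw [Finset.sum_comm]
  congr 1; ext k; congr 1; ext l; ring

/-- Corollary 1: in a qubit system the Rényi entropy of an observable with eigenvalues
`±1` is a function of its variance alone:
`H_α(A) = (1/(1−α)) ln(a₊^α + a₋^α)` with `a_± = (1 ± √(1−ΔA²))/2`. -/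
theorem qubit_renyi_entropy_eq_function_of_variance
    (ρ A : Matrix (Fin 2) (Fin 2) ℂ)
    (hρ : ρ.PosSemidef) (hρtr : ρ.trace = 1)
    (hAherm : A.IsHermitian) (hAtr : A.trace = 0) (hA2 : A * A = 1)
    (v : Fin 2 → Fin 2 → ℂ)
    (hv : ∀ i j, star (v i) ⬝ᵥ v j = if i = j then 1 else 0)
    (hv0 : A *ᵥ v 0 = v 0) (hv1 : A *ᵥ v 1 = -v 1)
    (p : Fin 2 → ℝ)
    (hp : ∀ j, star (v j) ⬝ᵥ ρ *ᵥ v j = (p j : ℂ))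
    (V : ℝ)
    (hV : (ρ * (A * A)).trace - ((ρ * A).trace) ^ 2 = (V : ℂ))
    (α : ℝ) (hα : 0 < α) (hα1 : α ≠ 1) :
    (1 / (1 - α)) * Real.log (p 0 ^ α + p 1 ^ α) =
      (1 / (1 - α)) * Real.log
        (((1 + Real.sqrt (1 - V)) / 2) ^ α + ((1 - Real.sqrt (1 - V)) / 2) ^ α) := by
  -- trace ρ = p 0 + p 1
  have htrρ : ρ.trace = (p 0 : ℂ) + (p 1 : ℂ) := by
    rw [aux_trace_basis ρ v hv, Fin.sum_univ_two, hp 0, hp 1]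
  -- trace (ρ * A) = p 0 - p 1
  have htrρA : (ρ * A).trace = (p 0 : ℂ) - (p 1 : ℂ) := by
    rw [aux_trace_basis (ρ * A) v hv, Fin.sum_univ_two]
    have e0 : star (v 0) ⬝ᵥ (ρ * A) *ᵥ v 0 = (p 0 : ℂ) := by
      rw [← Matrix.mulVec_mulVec, hv0, hp 0]
    have e1 : star (v 1) ⬝ᵥ (ρ * A) *ᵥ v 1 = -(p 1 : ℂ) := by
      rw [← Matrix.mulVec_mulVec, hv1, Matrix.mulVec_neg, dotProduct_neg, hp 1]
    rw [e0, e1]; ring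
  have hsum : p 0 + p 1 = 1 := by
    have : ((p 0 + p 1 : ℝ) : ℂ) = ((1 : ℝ) : ℂ) := by
      push_cast; rw [← htrρ, hρtr]
    exact_mod_cast this
  have hVval : V = 1 - (p 0 - p 1) ^ 2 := by
    have : ((1 - (p 0 - p 1) ^ 2 : ℝ) : ℂ) = (V : ℂ) := by
      push_cast
      rw [← hV, hA2, Matrix.mul_one, hρtr, htrρA]
    exact_mod_cast this.symm
  set d := p 0 - p 1 with hd
  have hsqrt : Real.sqrt (1 - V) = |d| := by
    rw [hVval, show (1 : ℝ) - (1 - d ^ 2) = d ^ 2 by ring, Real.sqrt_sq_eq_abs]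
  rcases abs_cases d with ⟨habs, _⟩ | ⟨habs, _⟩
  · have h0 : (1 + Real.sqrt (1 - V)) / 2 = p 0 := by
      rw [hsqrt, habs]; rw [hd] at *; linarith
    have h1 : (1 - Real.sqrt (1 - V)) / 2 = p 1 := by
      rw [hsqrt, habs]; rw [hd] at *; linarith
    rw [h0, h1]
  · have h0 : (1 + Real.sqrt (1 - V)) / 2 = p 1 := by
      rw [hsqrt, habs]; rw [hd] at *; linarith
    have h1 : (1 - Real.sqrt (1 - V)) / 2 = p 0 := by
      rw [hsqrt, habs]; rw [hd] at *; linarith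
    rw [h0, h1, add_comm]
end

section
/- For every real α > 0 with α ≠ 1, the function f_α : [0,1] → ℝ defined by f_α(x) = (1/(1−α)) · ln( a_+(x)^α + a_-(x)^α ), where a_±(x) = (1 ± √(1 − x))/2, is strictly monotonically increasing on [0,1]. Consequently f_α possesses an inverse function g_α = f_α^{-1} from [f_α(0), f_α(1)] = [0, ln 2] onto [0,1]. -/
/-- The functional relation between the variance `x = ΔA²` of a qubit observable with
eigenvalues `±1` and its Rényi entropy of order `α`. -/
noncomputable def renyiOfVariance (α x : ℝ) : ℝ :=
  (1 / (1 - α)) *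
    Real.log (((1 + Real.sqrt (1 - x)) / 2) ^ α + ((1 - Real.sqrt (1 - x)) / 2) ^ α)

/-!
Write `f_α(x) = H_α(√(1 - x))`, where `H_α(t) = (1/(1-α)) log(((1+t)/2)^α + ((1-t)/2)^α)` is the
Rényi entropy of the binary distribution `((1+t)/2, (1-t)/2)`. As `t` grows the two probabilities
spread apart symmetrically about `1/2`, so the power sum `((1+t)/2)^α + ((1-t)/2)^α` is strictly
increasing when `u ↦ u^α` is strictly convex (`α > 1`) and strictly decreasing when it is strictly
concave (`α < 1`); with the sign of `1/(1-α)` this makes `H_α` strictly decreasing on `[0,1]`.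
As `x ↦ √(1-x)` is strictly decreasing, `f_α` is strictly increasing; being continuous, it is a
bijection from `[0,1]` onto `[f_α 0, f_α 1] = [0, log 2]` by the intermediate value theorem.
-/

open Set Real

theorem StrictMonoOn.bijOn_Icc {α β : Type*} [ConditionallyCompleteLinearOrder α]
    [TopologicalSpace α] [OrderTopology α] [DenselyOrdered α] [LinearOrder β] [TopologicalSpace β]
    [OrderClosedTopology β] {f : α → β} {a b : α} (hf : StrictMonoOn f (Icc a b))
    (hc : ContinuousOn f (Icc a b)) (hab : a ≤ b) : BijOn f (Icc a b) (Icc (f a) (f b)) :=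
  ⟨hf.monotoneOn.mapsTo_Icc, hf.injOn,
    hc.surjOn_Icc (left_mem_Icc.2 hab) (right_mem_Icc.2 hab)⟩

section SymmetricSum

variable {φ : ℝ → ℝ} {c r : ℝ}

theorem StrictConvexOn.strictMonoOn_add_comp_sub (hφ : StrictConvexOn ℝ (Icc (c - r) (c + r)) φ) :
    StrictMonoOn (fun t => φ (c + t) + φ (c - t)) (Icc 0 r) := by
  rintro s ⟨hs0, -⟩ t ⟨-, htr⟩ hst
  have ht : 0 < t := hs0.trans_lt hst
  have hlo : c - t ∈ Icc (c - r) (c + r) := ⟨by linarith, by linarith⟩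
  have hhi : c + t ∈ Icc (c - r) (c + r) := ⟨by linarith, by linarith⟩
  have hne : c - t ≠ c + t := by linarith
  -- `c ± s` are the convex combinations of `c ∓ t` with weights `(t ∓ s)/(2t)`, `(t ± s)/(2t)`.
  have hμ : 0 < (t - s) / (2 * t) := by apply div_pos <;> linarith
  have hν : 0 < (t + s) / (2 * t) := by apply div_pos <;> linarith
  have hμν : (t - s) / (2 * t) + (t + s) / (2 * t) = 1 := by field_simp; ring
  have hplus := hφ.2 hlo hhi hne hμ hν hμν
  have hminus := hφ.2 hlo hhi hne hν hμ (by linarith)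
  have hplus_eq : (t - s) / (2 * t) * (c - t) + (t + s) / (2 * t) * (c + t) = c + s := by
    field_simp; ring
  have hminus_eq : (t + s) / (2 * t) * (c - t) + (t - s) / (2 * t) * (c + t) = c - s := by
    field_simp; ring
  simp only [smul_eq_mul, hplus_eq, hminus_eq] at hplus hminus
  dsimp only
  linear_combination hplus + hminus + (φ (c - t) + φ (c + t)) * hμν

theorem StrictConcaveOn.strictAntiOn_add_comp_sub
    (hφ : StrictConcaveOn ℝ (Icc (c - r) (c + r)) φ) :
    StrictAntiOn (fun t => φ (c + t) + φ (c - t)) (Icc 0 r) := by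
  intro s hs t ht hst
  have := hφ.neg.strictMonoOn_add_comp_sub hs ht hst
  simp only [Pi.neg_apply] at this
  dsimp only
  linarith

end SymmetricSum

noncomputable def binaryPowerSum (α t : ℝ) : ℝ :=
  ((1 + t) / 2) ^ α + ((1 - t) / 2) ^ α

noncomputable def binaryRenyiEntropy (α t : ℝ) : ℝ :=
  (1 / (1 - α)) * Real.log (binaryPowerSum α t)

section BinaryPowerSum

variable {α : ℝ}

theorem binaryPowerSum_pos {t : ℝ} (ht : t ∈ Icc (0 : ℝ) 1) : 0 < binaryPowerSum α t := by
  have hplus : 0 < (1 + t) / 2 := by linarith [ht.1]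
  have hminus : 0 ≤ (1 - t) / 2 := by linarith [ht.2]
  exact add_pos_of_pos_of_nonneg (rpow_pos_of_pos hplus α) (rpow_nonneg hminus α)

theorem continuous_binaryPowerSum (hα : 0 ≤ α) : Continuous (binaryPowerSum α) := by
  unfold binaryPowerSum
  fun_prop (disch := exact hα)

theorem binaryPowerSum_eq_comp_half (α : ℝ) :
    binaryPowerSum α = (fun u => (1 / 2 + u) ^ α + (1 / 2 - u) ^ α) ∘ (· / 2) := by
  ext t
  simp only [binaryPowerSum, Function.comp_apply, add_div, sub_div]

theorem mapsTo_half_Icc : MapsTo (· / 2 : ℝ → ℝ) (Icc 0 1) (Icc 0 (1 / 2)) :=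
  fun _ ⟨h0, h1⟩ => ⟨by linarith, by linarith⟩

theorem binaryPowerSum_strictMonoOn (hα : 1 < α) : StrictMonoOn (binaryPowerSum α) (Icc 0 1) := by
  rw [binaryPowerSum_eq_comp_half]
  have hφ : StrictConvexOn ℝ (Icc (1 / 2 - 1 / 2) (1 / 2 + 1 / 2)) fun u : ℝ => u ^ α :=
    (strictConvexOn_rpow hα).subset (by norm_num [Icc_subset_Ici_self]) (convex_Icc _ _)
  exact hφ.strictMonoOn_add_comp_sub.comp
    ((strictMono_id.div_const two_pos).strictMonoOn _) mapsTo_half_Icc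

theorem binaryPowerSum_strictAntiOn (hα₀ : 0 < α) (hα₁ : α < 1) :
    StrictAntiOn (binaryPowerSum α) (Icc 0 1) := by
  rw [binaryPowerSum_eq_comp_half]
  have hφ : StrictConcaveOn ℝ (Icc (1 / 2 - 1 / 2) (1 / 2 + 1 / 2)) fun u : ℝ => u ^ α :=
    (strictConcaveOn_rpow hα₀ hα₁).subset (by norm_num [Icc_subset_Ici_self]) (convex_Icc _ _)
  exact hφ.strictAntiOn_add_comp_sub.comp_strictMonoOn
    ((strictMono_id.div_const two_pos).strictMonoOn _) mapsTo_half_Icc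

end BinaryPowerSum

section BinaryRenyiEntropy

variable {α : ℝ}

theorem binaryRenyiEntropy_strictAntiOn (hα₀ : 0 < α) (hα₁ : α ≠ 1) :
    StrictAntiOn (binaryRenyiEntropy α) (Icc 0 1) := by
  have hpos : MapsTo (binaryPowerSum α) (Icc 0 1) (Ioi 0) := fun _ ht => binaryPowerSum_pos ht
  intro s hs t ht hst
  rcases hα₁.lt_or_gt with hlt | hgt
  · have hlog := strictMonoOn_log.comp_strictAntiOn (binaryPowerSum_strictAntiOn hα₀ hlt) hpos
    exact mul_lt_mul_of_pos_left (hlog hs ht hst) (one_div_pos.2 (sub_pos.2 hlt))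
  · have hlog := strictMonoOn_log.comp (binaryPowerSum_strictMonoOn hgt) hpos
    exact mul_lt_mul_of_neg_left (hlog hs ht hst) (one_div_neg.2 (sub_neg.2 hgt))

theorem continuousOn_binaryRenyiEntropy (hα : 0 ≤ α) :
    ContinuousOn (binaryRenyiEntropy α) (Icc 0 1) :=
  continuousOn_const.mul <| (continuous_binaryPowerSum hα).continuousOn.log
    fun _ ht => (binaryPowerSum_pos ht).ne'

end BinaryRenyiEntropy

theorem strictAntiOn_sqrt_one_sub : StrictAntiOn (fun x : ℝ => √(1 - x)) (Icc 0 1) :=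
  fun _ _ _ hy hxy => sqrt_lt_sqrt (by linarith [hy.2]) (by linarith)

theorem mapsTo_sqrt_one_sub : MapsTo (fun x : ℝ => √(1 - x)) (Icc 0 1) (Icc 0 1) :=
  fun _ hx => ⟨sqrt_nonneg _, sqrt_le_one.2 (by linarith [hx.1])⟩

theorem renyiOfVariance_eq_comp (α : ℝ) :
    renyiOfVariance α = binaryRenyiEntropy α ∘ fun x => √(1 - x) :=
  rfl

theorem renyiOfVariance_zero {α : ℝ} (hα : α ≠ 0) : renyiOfVariance α 0 = 0 := by
  simp [renyiOfVariance, zero_rpow hα]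

theorem renyiOfVariance_one {α : ℝ} (hα : α ≠ 1) : renyiOfVariance α 1 = Real.log 2 := by
  have h1α : 1 - α ≠ 0 := sub_ne_zero.2 hα.symm
  have hsum : ((1 : ℝ) / 2) ^ α + (1 / 2) ^ α = 2 ^ (1 - α) := by
    rw [rpow_sub two_pos, rpow_one, div_rpow zero_le_one zero_le_two, one_rpow]
    ring
  simp only [renyiOfVariance, sub_self, sqrt_zero, add_zero, sub_zero, hsum,
    log_rpow two_pos]
  field_simp

/-- For every `α > 0`, `α ≠ 1`, the function `f_α(x) = (1/(1−α)) ln(a₊(x)^α + a₋(x)^α)`,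
`a_±(x) = (1 ± √(1−x))/2`, is strictly increasing on `[0,1]`, with `f_α(0) = 0` and
`f_α(1) = ln 2`, hence it has an inverse `g_α` from `[0, ln 2]` onto `[0,1]`. -/
theorem renyiOfVariance_strictMonoOn_and_invertible
    (α : ℝ) (hα : 0 < α) (hα1 : α ≠ 1) :
    StrictMonoOn (renyiOfVariance α) (Set.Icc 0 1) ∧
    renyiOfVariance α 0 = 0 ∧ renyiOfVariance α 1 = Real.log 2 ∧
    ∃ g : ℝ → ℝ,
      Set.MapsTo g (Set.Icc 0 (Real.log 2)) (Set.Icc 0 1) ∧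
      Set.MapsTo (renyiOfVariance α) (Set.Icc 0 1) (Set.Icc 0 (Real.log 2)) ∧
      Set.InvOn g (renyiOfVariance α) (Set.Icc 0 1) (Set.Icc 0 (Real.log 2)) := by
  have hmono : StrictMonoOn (renyiOfVariance α) (Icc 0 1) := by
    rw [renyiOfVariance_eq_comp]
    exact (binaryRenyiEntropy_strictAntiOn hα hα1).comp strictAntiOn_sqrt_one_sub
      mapsTo_sqrt_one_sub
  have hcont : ContinuousOn (renyiOfVariance α) (Icc 0 1) := by
    rw [renyiOfVariance_eq_comp]
    exact (continuousOn_binaryRenyiEntropy hα.le).comp (by fun_prop) mapsTo_sqrt_one_sub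
  have hbij := hmono.bijOn_Icc hcont zero_le_one
  rw [renyiOfVariance_zero hα.ne', renyiOfVariance_one hα1] at hbij
  exact ⟨hmono, renyiOfVariance_zero hα.ne', renyiOfVariance_one hα1,
    Function.invFunOn (renyiOfVariance α) (Icc 0 1), hbij.surjOn.mapsTo_invFunOn, hbij.mapsTo,
    hbij.invOn_invFunOn⟩
end

section
/- Let ρ be a 2×2 density matrix and let A, B be 2×2 Hermitian matrices with Tr A = Tr B = 0 and A² = B² = I, with orthonormal eigenbases {|a_1⟩, |a_2⟩} and {|b_1⟩, |b_2⟩} respectively. Let c_ab = max_{j,k} |⟨a_j|b_k⟩|, let ΔA², ΔB² be the variances of A and B in state ρ, and set a_± = (1 ± √(1 − ΔA²))/2 and b_± = (1 ± √(1 − ΔB²))/2. Then, with the convention 0⁰ = 1, a_+^{a_+} · a_-^{a_-} · b_+^{b_+} · b_-^{b_-} ≤ c_ab². -/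
open Matrix ComplexOrder

/-!
Let `m_A = Tr ρA`, `m_B = Tr ρB` and `t = 2 |⟨a₀|b₀⟩|² - 1`. The variances are `1 - m_A²`
and `1 - m_B²`; the overlap matrix of the two bases is unitary, so `c_ab² = (1 + |t|)/2`;
and `AB + BA = Tr (AB) = 2t` since `A` and `B` are traceless `2 × 2` matrices.

Since `p^p (1-p)^(1-p) = exp (-H(p))` and `H(p) ≥ 4p(1-p) log 2`, the left-hand side is at
most `2^(m_A² + m_B² - 2)`. The entropy bound holds because, with `p = (1+s)/2`, the quotient
`((1+s) log(1+s) + (1-s) log(1-s)) / s²` is a power series in `s²` with positive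
coefficients, hence at most its value `2 log 2` at `s = 1`.

The operator `Y = m_A A + m_B B` has `Y² = m_A² + m_B² + 2t m_A m_B`, so
`(Tr ρY)² ≤ Tr ρY²` gives `m_A² + m_B² ≤ 1 + |t|`. Finally `2^(|t| - 1) ≤ (1 + |t|)/2`
by Bernoulli's inequality.
-/

namespace Real

open Filter Topology

lemma hasSum_mul_log_one_add_add_mul_log_one_sub {t : ℝ} (ht : |t| < 1) :
    HasSum (fun k : ℕ => (t ^ 2) ^ (k + 1) / ((2 * k + 1) * (k + 1)))
      ((1 + t) * log (1 + t) + (1 - t) * log (1 - t)) := by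
  have ht2 : |t ^ 2| < 1 := by rwa [abs_pow, sq_lt_one_iff_abs_lt_one, abs_abs]
  obtain ⟨hpos, hneg⟩ : 0 < 1 + t ∧ 0 < 1 - t := by constructor <;> linarith [abs_lt.mp ht]
  have h := ((hasSum_log_sub_log_of_abs_lt_one ht).mul_left t).sub
    (hasSum_pow_div_log_of_abs_lt_one ht2)
  have hterm (k : ℕ) :
      t * (2 * (1 / (2 * k + 1)) * t ^ (2 * k + 1)) - (t ^ 2) ^ (k + 1) / (k + 1) =
        (t ^ 2) ^ (k + 1) / ((2 * k + 1) * (k + 1)) := by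
    field_simp
    ring
  rw [show 1 - t ^ 2 = (1 + t) * (1 - t) by ring, log_mul hpos.ne' hneg.ne'] at h
  simp only [hterm] at h
  rwa [show (1 + t) * log (1 + t) + (1 - t) * log (1 - t) =
    t * (log (1 + t) - log (1 - t)) - -(log (1 + t) + log (1 - t)) by ring]

lemma mul_log_one_add_add_mul_log_one_sub_le {t : ℝ} (ht : |t| ≤ 1) :
    (1 + t) * log (1 + t) + (1 - t) * log (1 - t) ≤ 2 * log 2 * t ^ 2 := by
  set f : ℝ → ℝ := fun t => (1 + t) * log (1 + t) + (1 - t) * log (1 - t) with hf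
  change f t ≤ _
  rcases ht.lt_or_eq with hlt | hone
  · have hle : ∀ s ∈ Set.Ioo |t| 1, f t ≤ t ^ 2 * (f s / s ^ 2) := by
      rintro s ⟨hts, hs1⟩
      have hs0 : 0 < s := (abs_nonneg t).trans_lt hts
      have hts2 : t ^ 2 ≤ s ^ 2 := sq_le_sq.mpr (hts.le.trans_eq (abs_of_pos hs0).symm)
      rw [← mul_div_assoc, le_div_iff₀ (by positivity)]
      refine hasSum_le (fun k => ?_)
        ((hasSum_mul_log_one_add_add_mul_log_one_sub hlt).mul_right _)
        ((hasSum_mul_log_one_add_add_mul_log_one_sub (by rwa [abs_of_pos hs0])).mul_left _)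
      calc (t ^ 2) ^ (k + 1) / ((2 * k + 1) * (k + 1)) * s ^ 2
          = (t ^ 2) ^ k * (t ^ 2 * s ^ 2 / ((2 * k + 1) * (k + 1))) := by ring
        _ ≤ (s ^ 2) ^ k * (t ^ 2 * s ^ 2 / ((2 * k + 1) * (k + 1))) := by gcongr
        _ = t ^ 2 * ((s ^ 2) ^ (k + 1) / ((2 * k + 1) * (k + 1))) := by ring
    have hlim :
        Tendsto (fun s => t ^ 2 * (f s / s ^ 2)) (𝓝[<] 1) (𝓝 (t ^ 2 * (f 1 / 1 ^ 2))) := by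
      refine (ContinuousAt.tendsto ?_).mono_left nhdsWithin_le_nhds
      have : Continuous f := by fun_prop
      fun_prop (disch := norm_num)
    have := ge_of_tendsto hlim (Filter.mem_of_superset (Ioo_mem_nhdsLT hlt) hle)
    norm_num [hf] at this
    linarith
  · rcases (abs_eq zero_le_one).mp hone with rfl | rfl <;> norm_num [hf]

lemma four_mul_mul_one_sub_mul_log_two_le_binEntropy {p : ℝ} (h0 : 0 ≤ p) (h1 : p ≤ 1) :
    4 * p * (1 - p) * log 2 ≤ binEntropy p := by
  have h := mul_log_one_add_add_mul_log_one_sub_le (t := 2 * p - 1)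
    (abs_le.mpr ⟨by linarith, by linarith⟩)
  have hmul (x : ℝ) : x * 2 * log (x * 2) = -(2 * negMulLog x + x * negMulLog 2) := by
    rw [← negMulLog_mul, negMulLog]
    ring
  rw [show 1 + (2 * p - 1) = p * 2 by ring, show 1 - (2 * p - 1) = (1 - p) * 2 by ring,
    hmul, hmul, show negMulLog 2 = -2 * log 2 from rfl] at h
  rw [binEntropy_eq_negMulLog_add_negMulLog_one_sub]
  linarith

lemma rpow_self_eq_exp_neg_negMulLog {x : ℝ} (hx : 0 ≤ x) : x ^ x = exp (-negMulLog x) := by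
  rcases hx.eq_or_lt with rfl | hx
  · simp
  · rw [rpow_def_of_pos hx, negMulLog, neg_mul, neg_neg, mul_comm]

lemma rpow_self_mul_rpow_self_one_sub_le {p : ℝ} (h0 : 0 ≤ p) (h1 : p ≤ 1) :
    p ^ p * (1 - p) ^ (1 - p) ≤ 2 ^ (-(4 * p * (1 - p))) := by
  rw [rpow_self_eq_exp_neg_negMulLog h0, rpow_self_eq_exp_neg_negMulLog (by linarith),
    ← exp_add, ← neg_add, ← binEntropy_eq_negMulLog_add_negMulLog_one_sub,
    rpow_def_of_pos two_pos]
  exact exp_le_exp.mpr (by linarith [four_mul_mul_one_sub_mul_log_two_le_binEntropy h0 h1])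

lemma rpow_self_mul_rpow_self_le_two_rpow {m : ℝ} (hm : m ^ 2 ≤ 1) :
    ((1 + |m|) / 2) ^ ((1 + |m|) / 2) * ((1 - |m|) / 2) ^ ((1 - |m|) / 2) ≤ 2 ^ (m ^ 2 - 1) := by
  have hm1 := (sq_le_one_iff_abs_le_one m).mp hm
  have h := rpow_self_mul_rpow_self_one_sub_le (p := (1 + |m|) / 2) (by positivity) (by linarith)
  rwa [show 1 - (1 + |m|) / 2 = (1 - |m|) / 2 by ring,
    show -(4 * ((1 + |m|) / 2) * ((1 - |m|) / 2)) = m ^ 2 - 1 by rw [← sq_abs m]; ring] at h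

lemma two_rpow_sub_one_le {τ : ℝ} (h0 : 0 ≤ τ) (h1 : τ ≤ 1) :
    (2 : ℝ) ^ (τ - 1) ≤ (1 + τ) / 2 := by
  have := rpow_one_add_le_one_add_mul_self (s := 1) (by norm_num) h0 h1
  rw [rpow_sub_one two_ne_zero]
  norm_num at this ⊢
  linarith

lemma rpow_self_prod_le_of_sq_add_sq_le {x y τ : ℝ} (hx : x ^ 2 ≤ 1) (hy : y ^ 2 ≤ 1)
    (hτ0 : 0 ≤ τ) (hτ1 : τ ≤ 1) (hxy : x ^ 2 + y ^ 2 ≤ 1 + τ) :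
    ((1 + |x|) / 2) ^ ((1 + |x|) / 2) * ((1 - |x|) / 2) ^ ((1 - |x|) / 2) *
      ((1 + |y|) / 2) ^ ((1 + |y|) / 2) * ((1 - |y|) / 2) ^ ((1 - |y|) / 2) ≤ (1 + τ) / 2 := by
  have hy1 := (sq_le_one_iff_abs_le_one y).mp hy
  rw [mul_assoc _ (((1 + |y|) / 2) ^ _)]
  calc _ ≤ (2 : ℝ) ^ (x ^ 2 - 1) * 2 ^ (y ^ 2 - 1) :=
        mul_le_mul (rpow_self_mul_rpow_self_le_two_rpow hx)
          (rpow_self_mul_rpow_self_le_two_rpow hy)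
          (mul_nonneg (by positivity) (rpow_nonneg (by linarith) _)) (by positivity)
    _ = 2 ^ (x ^ 2 + y ^ 2 - 1 - 1) := by rw [← rpow_add two_pos]; ring_nf
    _ ≤ 2 ^ (τ - 1) := rpow_le_rpow_of_exponent_le one_le_two (by linarith)
    _ ≤ (1 + τ) / 2 := two_rpow_sub_one_le hτ0 hτ1

end Real

namespace Matrix

lemma mul_add_mul_eq_trace_mul_smul_one {R : Type*} [CommRing R]
    {A B : Matrix (Fin 2) (Fin 2) R} (hA : A.trace = 0) (hB : B.trace = 0) :
    A * B + B * A = (A * B).trace • 1 := by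
  rw [trace_fin_two, add_eq_zero_iff_eq_neg'] at hA hB
  ext i j
  fin_cases i <;> fin_cases j <;> simp [trace_fin_two, mul_apply, hA, hB] <;> ring

variable {n : Type*}

lemma isHermitian_vecMulVec_star_sub_vecMulVec_star (u v : n → ℂ) :
    (vecMulVec u (star u) - vecMulVec v (star v)).IsHermitian := by
  simp [IsHermitian, conjTranspose_sub]

variable [Fintype n]

lemma trace_vecMulVec_star_mul_vecMulVec_star (u v : n → ℂ) :
    (vecMulVec u (star u) * vecMulVec v (star v)).trace = (‖star u ⬝ᵥ v‖ ^ 2 : ℝ) := by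
  rw [vecMulVec_mul_vecMulVec, trace_vecMulVec, dotProduct_smul, dotProduct_star,
    dotProduct_comm v, smul_eq_mul, Complex.star_def, Complex.mul_conj']
  norm_cast

lemma PosSemidef.trace_mul_conjTranspose_mul_self_nonneg {ρ : Matrix n n ℂ} (hρ : ρ.PosSemidef)
    (Z : Matrix n n ℂ) : 0 ≤ (ρ * (Zᴴ * Z)).trace := by
  rw [← Matrix.mul_assoc, trace_mul_cycle]
  exact (hρ.mul_mul_conjTranspose_same Z).trace_nonneg

lemma IsHermitian.exists_trace_mul_eq_ofReal {ρ A : Matrix n n ℂ} (hρ : ρ.IsHermitian)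
    (hA : A.IsHermitian) : ∃ m : ℝ, (ρ * A).trace = m := by
  refine Complex.conj_eq_iff_real.mp ?_
  rw [← Complex.star_def, ← trace_conjTranspose, conjTranspose_mul, hρ.eq, hA.eq,
    trace_mul_comm]

variable [DecidableEq n]

lemma PosSemidef.sq_trace_mul_le {ρ Y : Matrix n n ℂ} (hρ : ρ.PosSemidef)
    (hρtr : ρ.trace = 1) (hY : Y.IsHermitian) : (ρ * Y).trace ^ 2 ≤ (ρ * (Y * Y)).trace := by
  set c := (ρ * Y).trace
  have h := hρ.trace_mul_conjTranspose_mul_self_nonneg (Y - c • 1)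
  rw [conjTranspose_sub, hY.eq, conjTranspose_smul, conjTranspose_one] at h
  simp only [sub_mul, mul_sub, Matrix.smul_mul, Matrix.mul_smul, Matrix.one_mul, trace_sub,
    trace_smul, hρtr, smul_eq_mul, Matrix.mul_one] at h
  rw [← sub_nonneg]
  convert h using 1
  ring

lemma PosSemidef.exists_trace_mul_eq_ofReal_sq_le_one {ρ A : Matrix n n ℂ} (hρ : ρ.PosSemidef)
    (hρtr : ρ.trace = 1) (hA : A.IsHermitian) (hA2 : A * A = 1) :
    ∃ m : ℝ, (ρ * A).trace = m ∧ m ^ 2 ≤ 1 := by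
  obtain ⟨m, hm⟩ := hρ.isHermitian.exists_trace_mul_eq_ofReal hA
  have h := hρ.sq_trace_mul_le hρtr hA
  rw [hm, hA2, Matrix.mul_one, hρtr] at h
  exact ⟨m, hm, by exact_mod_cast h⟩

lemma sq_add_sq_le_one_add_abs_of_anticomm {ρ A B : Matrix n n ℂ}
    (hρ : ρ.PosSemidef) (hρtr : ρ.trace = 1) (hA : A.IsHermitian) (hB : B.IsHermitian)
    (hA2 : A * A = 1) (hB2 : B * B = 1) {t x y : ℝ} (hAB : A * B + B * A = (2 * t : ℂ) • 1)
    (hx : (ρ * A).trace = x) (hy : (ρ * B).trace = y) :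
    x ^ 2 + y ^ 2 ≤ 1 + |t| := by
  set Y := (x : ℂ) • A + (y : ℂ) • B
  have hY : Y.IsHermitian :=
    (hA.smul (Complex.conj_ofReal x)).add (hB.smul (Complex.conj_ofReal y))
  have hYY : Y * Y = ((x ^ 2 + y ^ 2 + 2 * t * x * y : ℝ) : ℂ) • 1 := by
    calc Y * Y = (x : ℂ) ^ 2 • (A * A) + ((x : ℂ) * y) • (A * B + B * A) +
          (y : ℂ) ^ 2 • (B * B) := by
          simp only [Y, add_mul, mul_add, Matrix.smul_mul, Matrix.mul_smul, smul_smul]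
          module
      _ = _ := by
          rw [hA2, hB2, hAB]
          push_cast
          module
  have h := hρ.sq_trace_mul_le hρtr hY
  simp only [Y, hYY, Matrix.mul_add, Matrix.mul_smul, trace_add, trace_smul, hρtr, hx, hy,
    smul_eq_mul, mul_one] at h
  have hvar : (x ^ 2 + y ^ 2) ^ 2 ≤ x ^ 2 + y ^ 2 + 2 * t * x * y := by
    rw [← Complex.real_le_real]
    convert h using 1
    push_cast
    ring
  have hcross : 2 * t * x * y ≤ |t| * (x ^ 2 + y ^ 2) := by
    calc 2 * t * x * y ≤ |2 * t * x * y| := le_abs_self _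
      _ = |t| * (2 * |x| * |y|) := by simp only [abs_mul, abs_two]; ring
      _ ≤ |t| * (x ^ 2 + y ^ 2) := by
          gcongr
          nlinarith [two_mul_le_add_sq |x| |y|, sq_abs x, sq_abs y]
  have hs : (x ^ 2 + y ^ 2) * (x ^ 2 + y ^ 2) ≤ (1 + |t|) * (x ^ 2 + y ^ 2) := by nlinarith
  rcases (add_nonneg (sq_nonneg x) (sq_nonneg y)).eq_or_lt with h0 | h0
  · rw [← h0]
    positivity
  · exact le_of_mul_le_mul_right hs h0

lemma sum_vecMulVec_star_self_eq_one {a : n → n → ℂ}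
    (ha : ∀ i j, star (a i) ⬝ᵥ a j = if i = j then 1 else 0) :
    ∑ i, vecMulVec (a i) (star (a i)) = 1 := by
  have h : (of a)ᵀᴴ * (of a)ᵀ = 1 := by
    ext i j
    simpa [mul_apply, dotProduct, one_apply] using ha i j
  ext k l
  simpa [mul_apply, vecMulVec_apply, sum_apply] using congr($(mul_eq_one_comm.mp h) k l)

lemma sum_norm_sq_star_dotProduct {b : n → n → ℂ}
    (hb : ∀ i j, star (b i) ⬝ᵥ b j = if i = j then 1 else 0) (u : n → ℂ) :
    ((∑ j, ‖star u ⬝ᵥ b j‖ ^ 2 : ℝ) : ℂ) = star u ⬝ᵥ u := by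
  have h := congr(star u ⬝ᵥ $(sum_vecMulVec_star_self_eq_one hb) *ᵥ u)
  rw [one_mulVec] at h
  rw [← h]
  simp [sum_mulVec, vecMulVec_mulVec, dotProduct_sum, star_dotProduct (b _) u, Complex.conj_mul']

section Qubit

variable {a b : Fin 2 → Fin 2 → ℂ} {A B : Matrix (Fin 2) (Fin 2) ℂ}

lemma norm_sq_star_dotProduct_fin_two (ha : ∀ i j, star (a i) ⬝ᵥ a j = if i = j then 1 else 0)
    (hb : ∀ i j, star (b i) ⬝ᵥ b j = if i = j then 1 else 0) :
    ‖star (a 0) ⬝ᵥ b 1‖ ^ 2 = 1 - ‖star (a 0) ⬝ᵥ b 0‖ ^ 2 ∧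
      ‖star (a 1) ⬝ᵥ b 0‖ ^ 2 = 1 - ‖star (a 0) ⬝ᵥ b 0‖ ^ 2 ∧
      ‖star (a 1) ⬝ᵥ b 1‖ ^ 2 = ‖star (a 0) ⬝ᵥ b 0‖ ^ 2 := by
  have row (i : Fin 2) : ‖star (a i) ⬝ᵥ b 0‖ ^ 2 + ‖star (a i) ⬝ᵥ b 1‖ ^ 2 = 1 := by
    have h := sum_norm_sq_star_dotProduct hb (a i)
    rw [ha, if_pos rfl, Fin.sum_univ_two] at h
    exact_mod_cast h
  have col : ‖star (a 0) ⬝ᵥ b 0‖ ^ 2 + ‖star (a 1) ⬝ᵥ b 0‖ ^ 2 = 1 := by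
    have h := sum_norm_sq_star_dotProduct ha (b 0)
    rw [hb, if_pos rfl, Fin.sum_univ_two, star_dotProduct (b 0), star_dotProduct (b 0),
      norm_star, norm_star] at h
    exact_mod_cast h
  have := row 0
  have := row 1
  exact ⟨by linarith, by linarith, by linarith⟩

lemma mul_self_eq_one_of_eq_vecMulVec_star_sub
    (ha : ∀ i j, star (a i) ⬝ᵥ a j = if i = j then 1 else 0)
    (hA : A = vecMulVec (a 0) (star (a 0)) - vecMulVec (a 1) (star (a 1))) : A * A = 1 := by
  rw [← sum_vecMulVec_star_self_eq_one ha, Fin.sum_univ_two, hA]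
  simp [sub_mul, mul_sub, vecMulVec_mul_vecMulVec, ha]

lemma trace_eq_zero_of_eq_vecMulVec_star_sub
    (ha : ∀ i j, star (a i) ⬝ᵥ a j = if i = j then 1 else 0)
    (hA : A = vecMulVec (a 0) (star (a 0)) - vecMulVec (a 1) (star (a 1))) : A.trace = 0 := by
  simp [hA, dotProduct_comm _ (star _), ha]

lemma trace_mul_eq_of_eq_vecMulVec_star_sub
    (ha : ∀ i j, star (a i) ⬝ᵥ a j = if i = j then 1 else 0)
    (hb : ∀ i j, star (b i) ⬝ᵥ b j = if i = j then 1 else 0)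
    (hA : A = vecMulVec (a 0) (star (a 0)) - vecMulVec (a 1) (star (a 1)))
    (hB : B = vecMulVec (b 0) (star (b 0)) - vecMulVec (b 1) (star (b 1))) :
    (A * B).trace = 2 * ((2 * ‖star (a 0) ⬝ᵥ b 0‖ ^ 2 - 1 : ℝ) : ℂ) := by
  obtain ⟨h01, h10, h11⟩ := norm_sq_star_dotProduct_fin_two ha hb
  rw [hA, hB, sub_mul, mul_sub, mul_sub]
  simp only [trace_sub, trace_vecMulVec_star_mul_vecMulVec_star, h01, h10, h11]
  push_cast
  ring

lemma max_norm_star_dotProduct_sq (ha : ∀ i j, star (a i) ⬝ᵥ a j = if i = j then 1 else 0)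
    (hb : ∀ i j, star (b i) ⬝ᵥ b j = if i = j then 1 else 0) :
    max (max ‖star (a 0) ⬝ᵥ b 0‖ ‖star (a 0) ⬝ᵥ b 1‖)
        (max ‖star (a 1) ⬝ᵥ b 0‖ ‖star (a 1) ⬝ᵥ b 1‖) ^ 2 =
      (1 + |2 * ‖star (a 0) ⬝ᵥ b 0‖ ^ 2 - 1|) / 2 := by
  obtain ⟨h01, h10, h11⟩ := norm_sq_star_dotProduct_fin_two ha hb
  rw [← h01] at h10
  rw [(sq_eq_sq₀ (norm_nonneg _) (norm_nonneg _)).mp h10,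
    (sq_eq_sq₀ (norm_nonneg _) (norm_nonneg _)).mp h11, max_comm ‖star (a 0) ⬝ᵥ b 1‖,
    max_self]
  rcases le_total ‖star (a 0) ⬝ᵥ b 0‖ ‖star (a 0) ⬝ᵥ b 1‖ with h | h
  · have h2 := pow_le_pow_left₀ (norm_nonneg _) h 2
    rw [max_eq_right h, h01, abs_of_nonpos (by linarith)]
    ring
  · have h2 := pow_le_pow_left₀ (norm_nonneg _) h 2
    rw [max_eq_left h, abs_of_nonneg (by linarith)]
    ring

end Qubit

end Matrix

/-- Eq. (16): variance-language form of the Maassen–Uffink entropic uncertainty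
relation for two qubit observables with eigenvalues `±1`:
`a₊^{a₊} a₋^{a₋} b₊^{b₊} b₋^{b₋} ≤ c_ab²` (real powers, so `0⁰ = 1`). -/
theorem qubit_maassen_uffink_variance_form
    (ρ A B : Matrix (Fin 2) (Fin 2) ℂ)
    (hρ : ρ.PosSemidef) (hρtr : ρ.trace = 1)
    (a b : Fin 2 → Fin 2 → ℂ)
    (ha : ∀ i j, star (a i) ⬝ᵥ a j = if i = j then 1 else 0)
    (hb : ∀ i j, star (b i) ⬝ᵥ b j = if i = j then 1 else 0)
    (hA : A = vecMulVec (a 0) (star (a 0)) - vecMulVec (a 1) (star (a 1)))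
    (hB : B = vecMulVec (b 0) (star (b 0)) - vecMulVec (b 1) (star (b 1)))
    (VA VB : ℝ)
    (hVA : (ρ * (A * A)).trace - ((ρ * A).trace) ^ 2 = (VA : ℂ))
    (hVB : (ρ * (B * B)).trace - ((ρ * B).trace) ^ 2 = (VB : ℂ))
    (cab : ℝ)
    (hcab : cab = max
      (max ‖star (a 0) ⬝ᵥ b 0‖ ‖star (a 0) ⬝ᵥ b 1‖)
      (max ‖star (a 1) ⬝ᵥ b 0‖ ‖star (a 1) ⬝ᵥ b 1‖)) :
    ((1 + Real.sqrt (1 - VA)) / 2) ^ ((1 + Real.sqrt (1 - VA)) / 2) *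
    ((1 - Real.sqrt (1 - VA)) / 2) ^ ((1 - Real.sqrt (1 - VA)) / 2) *
    ((1 + Real.sqrt (1 - VB)) / 2) ^ ((1 + Real.sqrt (1 - VB)) / 2) *
    ((1 - Real.sqrt (1 - VB)) / 2) ^ ((1 - Real.sqrt (1 - VB)) / 2) ≤ cab ^ 2 := by
  have hAH : A.IsHermitian := hA ▸ isHermitian_vecMulVec_star_sub_vecMulVec_star _ _
  have hBH : B.IsHermitian := hB ▸ isHermitian_vecMulVec_star_sub_vecMulVec_star _ _
  have hA2 := mul_self_eq_one_of_eq_vecMulVec_star_sub ha hA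
  have hB2 := mul_self_eq_one_of_eq_vecMulVec_star_sub hb hB
  obtain ⟨mA, hmA, hmA1⟩ := hρ.exists_trace_mul_eq_ofReal_sq_le_one hρtr hAH hA2
  obtain ⟨mB, hmB, hmB1⟩ := hρ.exists_trace_mul_eq_ofReal_sq_le_one hρtr hBH hB2
  rw [hA2, Matrix.mul_one, hρtr, hmA] at hVA
  rw [hB2, Matrix.mul_one, hρtr, hmB] at hVB
  have hVA' : VA = 1 - mA ^ 2 := by exact_mod_cast hVA.symm
  have hVB' : VB = 1 - mB ^ 2 := by exact_mod_cast hVB.symm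
  set t := 2 * ‖star (a 0) ⬝ᵥ b 0‖ ^ 2 - 1
  have hAB : A * B + B * A = (2 * t : ℂ) • 1 := by
    rw [mul_add_mul_eq_trace_mul_smul_one (trace_eq_zero_of_eq_vecMulVec_star_sub ha hA)
      (trace_eq_zero_of_eq_vecMulVec_star_sub hb hB),
      trace_mul_eq_of_eq_vecMulVec_star_sub ha hb hA hB]
  have ht : |t| ≤ 1 := abs_le.mpr
    ⟨by nlinarith [sq_nonneg ‖star (a 0) ⬝ᵥ b 0‖],
     by nlinarith [(norm_sq_star_dotProduct_fin_two ha hb).1,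
       sq_nonneg ‖star (a 0) ⬝ᵥ b 1‖]⟩
  rw [hVA', hVB', sub_sub_cancel, sub_sub_cancel, Real.sqrt_sq_eq_abs, Real.sqrt_sq_eq_abs, hcab,
    max_norm_star_dotProduct_sq ha hb]
  exact Real.rpow_self_prod_le_of_sq_add_sq_le hmA1 hmB1 (abs_nonneg t) ht
    (sq_add_sq_le_one_add_abs_of_anticomm hρ hρtr hAH hBH hA2 hB2 hAB hmA hmB)
end

section
/- Let ρ be a 2×2 density matrix and let A, B be 2×2 Hermitian matrices with Tr A = Tr B = 0 and A² = B² = I, with orthonormal eigenbases {|a_1⟩, |a_2⟩} and {|b_1⟩, |b_2⟩}. Let c_ab = max_{j,k} |⟨a_j|b_k⟩| and let ΔA², ΔB² be the variances of A and B in state ρ. Then (1 + √(1 − ΔA²)) · (1 + √(1 − ΔB²)) ≤ (1 + c_ab)². -/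
open Matrix ComplexOrder

/-! Write `p j = ⟨a_j|ρ|a_j⟩` and `q k = ⟨b_k|ρ|b_k⟩`; these are probability vectors. Since
`A² = 1` and `⟨A⟩ = p 0 - p 1`, we get `ΔA² = 1 - (p 0 - p 1)²`, so `1 + √(1 - ΔA²) = 2 max_j p j`,
and likewise for `B`. By Cauchy–Schwarz `|a⟩⟨a| + |b⟩⟨b| ≤ (1 + |⟨a|b⟩|) I` for unit vectors,
hence `p j + q k ≤ 1 + c_ab`, and AM–GM gives `4 p j q k ≤ (p j + q k)² ≤ (1 + c_ab)²`. -/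

open RCLike
open scoped InnerProductSpace

theorem norm_inner_sq_add_norm_inner_sq_le {𝕜 E : Type*} [RCLike 𝕜] [NormedAddCommGroup E]
    [InnerProductSpace 𝕜 E] {a b : E} (ha : ‖a‖ = 1) (hb : ‖b‖ = 1) (v : E) :
    ‖⟪a, v⟫_𝕜‖ ^ 2 + ‖⟪b, v⟫_𝕜‖ ^ 2 ≤ (1 + ‖⟪a, b⟫_𝕜‖) * ‖v‖ ^ 2 := by
  set x := ⟪a, v⟫_𝕜
  set y := ⟪b, v⟫_𝕜
  set s := ‖x‖ ^ 2 + ‖y‖ ^ 2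
  set w := x • a + y • b
  have hwv : re ⟪w, v⟫_𝕜 = s := by
    rw [inner_add_left, inner_smul_left, inner_smul_left, RCLike.conj_mul, RCLike.conj_mul]
    norm_cast
  have hww : ‖w‖ ^ 2 ≤ (1 + ‖⟪a, b⟫_𝕜‖) * s := by
    have hcross : re ⟪x • a, y • b⟫_𝕜 ≤ ‖x‖ * ‖y‖ * ‖⟪a, b⟫_𝕜‖ := by
      refine (re_le_norm _).trans_eq ?_
      simp only [inner_smul_left, inner_smul_right, norm_mul, norm_conj]
      ring
    have hamgm : 2 * (‖x‖ * ‖y‖) ≤ s := by nlinarith [sq_nonneg (‖x‖ - ‖y‖)]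
    rw [norm_add_sq (𝕜 := 𝕜), norm_smul, norm_smul, ha, hb]
    nlinarith [norm_nonneg ⟪a, b⟫_𝕜]
  have hcs : s ≤ ‖w‖ * ‖v‖ := hwv ▸ re_inner_le_norm w v
  rcases (by positivity : 0 ≤ s).eq_or_lt with hs | hs
  · rw [← hs]
    positivity
  · refine le_of_mul_le_mul_left ?_ hs
    calc s * s ≤ ‖w‖ ^ 2 * ‖v‖ ^ 2 := by nlinarith
      _ ≤ (1 + ‖⟪a, b⟫_𝕜‖) * s * ‖v‖ ^ 2 := by gcongr
      _ = s * ((1 + ‖⟪a, b⟫_𝕜‖) * ‖v‖ ^ 2) := by ring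

namespace Matrix

section

variable {𝕜 n : Type*} [RCLike 𝕜] [Fintype n]

theorem norm_star_dotProduct_sq_add_norm_star_dotProduct_sq_le {a b : n → 𝕜}
    (ha : star a ⬝ᵥ a = 1) (hb : star b ⬝ᵥ b = 1) (v : n → 𝕜) :
    ‖star a ⬝ᵥ v‖ ^ 2 + ‖star b ⬝ᵥ v‖ ^ 2 ≤ (1 + ‖star a ⬝ᵥ b‖) * re (star v ⬝ᵥ v) := by
  have hinner (u w : n → 𝕜) : star u ⬝ᵥ w = ⟪WithLp.toLp 2 u, WithLp.toLp 2 w⟫_𝕜 := by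
    rw [EuclideanSpace.inner_toLp_toLp, dotProduct_comm]
  have hnorm {u : n → 𝕜} (hu : star u ⬝ᵥ u = 1) : ‖WithLp.toLp 2 u‖ = 1 := by
    rw [@norm_eq_sqrt_re_inner 𝕜, ← hinner, hu, one_re, Real.sqrt_one]
  simp only [hinner, ← @norm_sq_eq_re_inner 𝕜]
  exact norm_inner_sq_add_norm_inner_sq_le (hnorm ha) (hnorm hb) _

theorem PosSemidef.re_dotProduct_mulVec_add_le {ρ : Matrix n n 𝕜} (hρ : ρ.PosSemidef)
    {a b : n → 𝕜} (ha : star a ⬝ᵥ a = 1) (hb : star b ⬝ᵥ b = 1) :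
    re (star a ⬝ᵥ ρ *ᵥ a) + re (star b ⬝ᵥ ρ *ᵥ b) ≤ (1 + ‖star a ⬝ᵥ b‖) * re ρ.trace := by
  obtain ⟨m, v, rfl⟩ := posSemidef_iff_eq_sum_vecMulVec.mp hρ
  have hquad (u : n → 𝕜) :
      re (star u ⬝ᵥ (∑ i, vecMulVec (v i) (star (v i))) *ᵥ u) = ∑ i, ‖star u ⬝ᵥ v i‖ ^ 2 := by
    rw [sum_mulVec, dotProduct_sum, map_sum]
    refine Finset.sum_congr rfl fun i _ => ?_
    rw [vecMulVec_mulVec, dotProduct_smul, star_dotProduct (v i), MulOpposite.smul_eq_mul_unop,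
      MulOpposite.unop_op, star_def, mul_conj, ← ofReal_pow, ofReal_re]
  have htrace : re (∑ i, vecMulVec (v i) (star (v i))).trace = ∑ i, re (star (v i) ⬝ᵥ v i) := by
    simp only [trace_sum, trace_vecMulVec, map_sum, dotProduct_comm]
  rw [hquad, hquad, htrace, Finset.mul_sum, ← Finset.sum_add_distrib]
  exact Finset.sum_le_sum fun i _ =>
    norm_star_dotProduct_sq_add_norm_star_dotProduct_sq_le ha hb (v i)

theorem trace_mul_vecMulVec_star (ρ : Matrix n n 𝕜) (u : n → 𝕜) :
    (ρ * vecMulVec u (star u)).trace = star u ⬝ᵥ ρ *ᵥ u := by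
  rw [mul_vecMulVec, trace_vecMulVec, dotProduct_comm]

theorem IsHermitian.coe_re_star_dotProduct_mulVec_self {ρ : Matrix n n 𝕜} (hρ : ρ.IsHermitian)
    (u : n → 𝕜) : (re (star u ⬝ᵥ ρ *ᵥ u) : 𝕜) = star u ⬝ᵥ ρ *ᵥ u :=
  RCLike.ext (by simp) (by simp [hρ.im_star_dotProduct_mulVec_self])

variable [DecidableEq n]

theorem sum_vecMulVec_star_eq_one {a : n → n → 𝕜}
    (ha : ∀ i j, star (a i) ⬝ᵥ a j = if i = j then 1 else 0) :
    ∑ i, vecMulVec (a i) (star (a i)) = 1 := by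
  set W : Matrix n n 𝕜 := (of a)ᵀ
  have hWW : Wᴴ * W = 1 := by
    ext i j
    simpa [W, mul_apply, dotProduct, one_apply] using ha i j
  calc ∑ i, vecMulVec (a i) (star (a i)) = W * Wᴴ := by
        ext k l
        simp [W, mul_apply, vecMulVec_apply, Matrix.sum_apply]
    _ = 1 := mul_eq_one_comm.mp hWW

theorem sum_re_star_dotProduct_mulVec_eq_re_trace (ρ : Matrix n n 𝕜) {a : n → n → 𝕜}
    (ha : ∀ i j, star (a i) ⬝ᵥ a j = if i = j then 1 else 0) :
    ∑ i, re (star (a i) ⬝ᵥ ρ *ᵥ a i) = re ρ.trace := by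
  rw [← map_sum]
  congr 1
  calc ∑ i, star (a i) ⬝ᵥ ρ *ᵥ a i = ∑ i, (ρ * vecMulVec (a i) (star (a i))).trace := by
        simp only [trace_mul_vecMulVec_star]
    _ = ρ.trace := by rw [← trace_sum, ← Finset.mul_sum, sum_vecMulVec_star_eq_one ha, mul_one]

end

section

variable {𝕜 : Type*} [RCLike 𝕜]

theorem vecMulVec_sub_vecMulVec_mul_self {a : Fin 2 → Fin 2 → 𝕜}
    (ha : ∀ i j, star (a i) ⬝ᵥ a j = if i = j then 1 else 0) :
    (vecMulVec (a 0) (star (a 0)) - vecMulVec (a 1) (star (a 1))) *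
      (vecMulVec (a 0) (star (a 0)) - vecMulVec (a 1) (star (a 1))) = 1 := by
  simp only [sub_mul, mul_sub, vecMulVec_mul_vecMulVec, ha]
  simpa [Fin.sum_univ_two] using sum_vecMulVec_star_eq_one ha

theorem IsHermitian.sqrt_one_sub_variance_eq_abs {ρ : Matrix (Fin 2) (Fin 2) 𝕜}
    (hρ : ρ.IsHermitian) (hρtr : ρ.trace = 1) {a : Fin 2 → Fin 2 → 𝕜}
    (ha : ∀ i j, star (a i) ⬝ᵥ a j = if i = j then 1 else 0) {V : ℝ}
    (hV : (ρ * ((vecMulVec (a 0) (star (a 0)) - vecMulVec (a 1) (star (a 1))) *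
      (vecMulVec (a 0) (star (a 0)) - vecMulVec (a 1) (star (a 1))))).trace -
      (ρ * (vecMulVec (a 0) (star (a 0)) - vecMulVec (a 1) (star (a 1)))).trace ^ 2 = V) :
    √(1 - V) = |re (star (a 0) ⬝ᵥ ρ *ᵥ a 0) - re (star (a 1) ⬝ᵥ ρ *ᵥ a 1)| := by
  rw [vecMulVec_sub_vecMulVec_mul_self ha, mul_one, hρtr, mul_sub, trace_sub,
    trace_mul_vecMulVec_star, trace_mul_vecMulVec_star,
    ← hρ.coe_re_star_dotProduct_mulVec_self (a 0), ← hρ.coe_re_star_dotProduct_mulVec_self (a 1)]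
    at hV
  have hV' : V = 1 - (re (star (a 0) ⬝ᵥ ρ *ᵥ a 0) - re (star (a 1) ⬝ᵥ ρ *ᵥ a 1)) ^ 2 := by
    exact_mod_cast hV.symm
  rw [hV', sub_sub_cancel, Real.sqrt_sq_eq_abs]

end

end Matrix

theorem one_add_abs_sub_mul_one_add_abs_sub_le {p q : Fin 2 → ℝ} {c : ℝ}
    (hp : p 0 + p 1 = 1) (hq : q 0 + q 1 = 1) (h : ∀ j k, p j + q k ≤ 1 + c) :
    (1 + |p 0 - p 1|) * (1 + |q 0 - q 1|) ≤ (1 + c) ^ 2 := by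
  have hmax {r : Fin 2 → ℝ} (hr : r 0 + r 1 = 1) :
      ∃ j, 1 + |r 0 - r 1| = 2 * r j ∧ 1 ≤ 2 * r j := by
    rcases abs_cases (r 0 - r 1) with ⟨habs, _⟩ | ⟨habs, _⟩
    · exact ⟨0, by linarith, by linarith⟩
    · exact ⟨1, by linarith, by linarith⟩
  obtain ⟨j, hj, hj1⟩ := hmax hp
  obtain ⟨k, hk, hk1⟩ := hmax hq
  calc (1 + |p 0 - p 1|) * (1 + |q 0 - q 1|) = 4 * p j * q k := by rw [hj, hk]; ring
    _ ≤ (p j + q k) ^ 2 := four_mul_le_sq_add _ _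
    _ ≤ (1 + c) ^ 2 := pow_le_pow_left₀ (by linarith) (h j k) 2

/-- Eq. (17): the variance-based uncertainty relation obtained from the majorization
uncertainty relation for two qubit observables with eigenvalues `±1`:
`(1 + √(1−ΔA²))(1 + √(1−ΔB²)) ≤ (1 + c_ab)²`. -/
theorem qubit_majorization_variance_form
    (ρ A B : Matrix (Fin 2) (Fin 2) ℂ)
    (hρ : ρ.PosSemidef) (hρtr : ρ.trace = 1)
    (a b : Fin 2 → Fin 2 → ℂ)
    (ha : ∀ i j, star (a i) ⬝ᵥ a j = if i = j then 1 else 0)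
    (hb : ∀ i j, star (b i) ⬝ᵥ b j = if i = j then 1 else 0)
    (hA : A = vecMulVec (a 0) (star (a 0)) - vecMulVec (a 1) (star (a 1)))
    (hB : B = vecMulVec (b 0) (star (b 0)) - vecMulVec (b 1) (star (b 1)))
    (VA VB : ℝ)
    (hVA : (ρ * (A * A)).trace - ((ρ * A).trace) ^ 2 = (VA : ℂ))
    (hVB : (ρ * (B * B)).trace - ((ρ * B).trace) ^ 2 = (VB : ℂ))
    (cab : ℝ)
    (hcab : cab = max
      (max (‖star (a 0) ⬝ᵥ b 0‖) (‖star (a 0) ⬝ᵥ b 1‖))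
      (max (‖star (a 1) ⬝ᵥ b 0‖) (‖star (a 1) ⬝ᵥ b 1‖))) :
    (1 + Real.sqrt (1 - VA)) * (1 + Real.sqrt (1 - VB)) ≤ (1 + cab) ^ 2 := by
  subst hA hB
  have hoverlap (j k : Fin 2) : ‖star (a j) ⬝ᵥ b k‖ ≤ cab := by
    subst hcab
    fin_cases j <;> fin_cases k <;> simp
  have hprob {c : Fin 2 → Fin 2 → ℂ} (hc : ∀ i j, star (c i) ⬝ᵥ c j = if i = j then 1 else 0) :
      re (star (c 0) ⬝ᵥ ρ *ᵥ c 0) + re (star (c 1) ⬝ᵥ ρ *ᵥ c 1) = 1 := by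
    simpa [Fin.sum_univ_two, hρtr] using sum_re_star_dotProduct_mulVec_eq_re_trace ρ hc
  rw [hρ.1.sqrt_one_sub_variance_eq_abs hρtr ha hVA, hρ.1.sqrt_one_sub_variance_eq_abs hρtr hb hVB]
  refine one_add_abs_sub_mul_one_add_abs_sub_le (p := fun j => re (star (a j) ⬝ᵥ ρ *ᵥ a j))
    (q := fun k => re (star (b k) ⬝ᵥ ρ *ᵥ b k)) (hprob ha) (hprob hb) fun j k => ?_
  calc _ ≤ (1 + ‖star (a j) ⬝ᵥ b k‖) * re ρ.trace :=
        hρ.re_dotProduct_mulVec_add_le (by simpa using ha j j) (by simpa using hb k k)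
    _ ≤ 1 + cab := by rw [hρtr, one_re, mul_one]; linarith [hoverlap j k]
end

section
/- Let ρ be any 2×2 density matrix and let σ_x, σ_y, σ_z be the standard Pauli matrices. For i ∈ {x, y, z}, let p_{i,1} and p_{i,2} = 1 − p_{i,1} be the probabilities of the two eigenvectors of σ_i in state ρ, and let H₂(σ_i) = −ln(p_{i,1}² + p_{i,2}²) be the collision entropy. Then the uncertainty equality e^{−H₂(σ_x)} + e^{−H₂(σ_y)} + e^{−H₂(σ_z)} = 1 + Tr[ρ²] holds. -/
open Matrix ComplexOrder

lemma pauli_aux (ρ : Matrix (Fin 2) (Fin 2) ℂ) (u : Fin 2 → ℂ) (k : ℂ)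
    (hk : u 1 = k * u 0) (hn : star u ⬝ᵥ u = 1) (p : ℝ)
    (hp : star u ⬝ᵥ ρ *ᵥ u = (p : ℂ)) :
    (p : ℂ) * (1 + (starRingEnd ℂ) k * k) =
      ρ 0 0 + k * ρ 0 1 + (starRingEnd ℂ) k * ρ 1 0 + (starRingEnd ℂ) k * k * ρ 1 1 := by
  simp only [dotProduct, mulVec, Fin.sum_univ_two, Pi.star_apply, RCLike.star_def, hk,
    _root_.map_mul] at hn hp
  linear_combination (-(1 : ℂ) - (starRingEnd ℂ) k * k) * hp +
    (ρ 0 0 + k * ρ 0 1 + (starRingEnd ℂ) k * ρ 1 0 + (starRingEnd ℂ) k * k * ρ 1 1) * hn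

lemma pauli_aux' (ρ : Matrix (Fin 2) (Fin 2) ℂ) (u : Fin 2 → ℂ) (k : ℂ)
    (hk : u 0 = k * u 1) (hn : star u ⬝ᵥ u = 1) (p : ℝ)
    (hp : star u ⬝ᵥ ρ *ᵥ u = (p : ℂ)) :
    (p : ℂ) * (1 + (starRingEnd ℂ) k * k) =
      ρ 1 1 + k * ρ 1 0 + (starRingEnd ℂ) k * ρ 0 1 + (starRingEnd ℂ) k * k * ρ 0 0 := by
  simp only [dotProduct, mulVec, Fin.sum_univ_two, Pi.star_apply, RCLike.star_def, hk,
    _root_.map_mul] at hn hp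
  linear_combination (-(1 : ℂ) - (starRingEnd ℂ) k * k) * hp +
    (ρ 1 1 + k * ρ 1 0 + (starRingEnd ℂ) k * ρ 0 1 + (starRingEnd ℂ) k * k * ρ 0 0) * hn

/-- Eq. (23): the collision-entropy uncertainty equality for the three Pauli matrices,
`e^{−H₂(σ_x)} + e^{−H₂(σ_y)} + e^{−H₂(σ_z)} = 1 + Tr[ρ²]`. -/
theorem pauli_collision_entropy_equality
    (ρ : Matrix (Fin 2) (Fin 2) ℂ)
    (hρ : ρ.PosSemidef) (hρtr : ρ.trace = 1)
    (σx σy σz : Matrix (Fin 2) (Fin 2) ℂ)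
    (hσx : σx = !![0, 1; 1, 0])
    (hσy : σy = !![0, -Complex.I; Complex.I, 0])
    (hσz : σz = !![1, 0; 0, -1])
    (vx vy vz : Fin 2 → Fin 2 → ℂ)
    (hvx : ∀ i j, star (vx i) ⬝ᵥ vx j = if i = j then 1 else 0)
    (hvy : ∀ i j, star (vy i) ⬝ᵥ vy j = if i = j then 1 else 0)
    (hvz : ∀ i j, star (vz i) ⬝ᵥ vz j = if i = j then 1 else 0)
    (hvx0 : σx *ᵥ vx 0 = vx 0) (hvx1 : σx *ᵥ vx 1 = -vx 1)
    (hvy0 : σy *ᵥ vy 0 = vy 0) (hvy1 : σy *ᵥ vy 1 = -vy 1)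
    (hvz0 : σz *ᵥ vz 0 = vz 0) (hvz1 : σz *ᵥ vz 1 = -vz 1)
    (px py pz : Fin 2 → ℝ)
    (hpx : ∀ j, star (vx j) ⬝ᵥ ρ *ᵥ vx j = (px j : ℂ))
    (hpy : ∀ j, star (vy j) ⬝ᵥ ρ *ᵥ vy j = (py j : ℂ))
    (hpz : ∀ j, star (vz j) ⬝ᵥ ρ *ᵥ vz j = (pz j : ℂ))
    (pur : ℝ) (hpur : (ρ * ρ).trace = (pur : ℂ)) :
    Real.exp (-(-Real.log (px 0 ^ 2 + px 1 ^ 2))) +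
    Real.exp (-(-Real.log (py 0 ^ 2 + py 1 ^ 2))) +
    Real.exp (-(-Real.log (pz 0 ^ 2 + pz 1 ^ 2))) = 1 + pur := by
  set a := ρ 0 0 with ha
  set b := ρ 0 1 with hb
  set c := ρ 1 0 with hc
  set d := ρ 1 1 with hd
  -- eigenvector structure
  have hkx0 : vx 0 1 = 1 * vx 0 0 := by
    have := congrFun hvx0 0
    simp [hσx, mulVec, dotProduct, Fin.sum_univ_two] at this
    simpa using this
  have hkx1 : vx 1 1 = (-1) * vx 1 0 := by
    have := congrFun hvx1 0
    simp [hσx, mulVec, dotProduct, Fin.sum_univ_two] at this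
    simpa using this
  have hky0 : vy 0 1 = Complex.I * vy 0 0 := by
    have := congrFun hvy0 1
    simp [hσy, mulVec, dotProduct, Fin.sum_univ_two] at this
    simpa using this.symm
  have hky1 : vy 1 1 = (-Complex.I) * vy 1 0 := by
    have := congrFun hvy1 1
    simp [hσy, mulVec, dotProduct, Fin.sum_univ_two] at this
    linear_combination this
  have hkz0 : vz 0 1 = 0 * vz 0 0 := by
    have := congrFun hvz0 1
    simp [hσz, mulVec, dotProduct, Fin.sum_univ_two] at this
    linear_combination -this / 2
  have hkz1 : vz 1 0 = 0 * vz 1 1 := by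
    have := congrFun hvz1 0
    simp [hσz, mulVec, dotProduct, Fin.sum_univ_two] at this
    linear_combination this / 2
  -- probabilities
  have ex0 := pauli_aux ρ (vx 0) 1 hkx0 (by simpa using hvx 0 0) (px 0) (hpx 0)
  have ex1 := pauli_aux ρ (vx 1) (-1) hkx1 (by simpa using hvx 1 1) (px 1) (hpx 1)
  have ey0 := pauli_aux ρ (vy 0) Complex.I hky0 (by simpa using hvy 0 0) (py 0) (hpy 0)
  have ey1 := pauli_aux ρ (vy 1) (-Complex.I) hky1 (by simpa using hvy 1 1) (py 1) (hpy 1)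
  have ez0 := pauli_aux ρ (vz 0) 0 hkz0 (by simpa using hvz 0 0) (pz 0) (hpz 0)
  have ez1 := pauli_aux' ρ (vz 1) 0 hkz1 (by simpa using hvz 1 1) (pz 1) (hpz 1)
  simp only [_root_.map_one, _root_.map_neg, Complex.conj_I, map_zero, ← ha, ← hb, ← hc,
    ← hd] at ex0 ex1 ey0 ey1 ez0 ez1
  have Ex0 : (px 0 : ℂ) * 2 = a + b + c + d := by linear_combination ex0
  have Ex1 : (px 1 : ℂ) * 2 = a - b - c + d := by linear_combination ex1
  have Ey0 : (py 0 : ℂ) * 2 = a + d + Complex.I * (b - c) := by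
    linear_combination ey0 + ((py 0 : ℂ) - d) * Complex.I_sq
  have Ey1 : (py 1 : ℂ) * 2 = a + d - Complex.I * (b - c) := by
    linear_combination ey1 + ((py 1 : ℂ) - d) * Complex.I_sq
  have Ez0 : (pz 0 : ℂ) = a := by linear_combination ez0
  have Ez1 : (pz 1 : ℂ) = d := by linear_combination ez1
  have htr : a + d = 1 := by
    simpa [Matrix.trace, Fin.sum_univ_two] using hρtr
  have hpurc : a * a + b * c + (c * b + d * d) = (pur : ℂ) := by
    simpa [Matrix.trace, Matrix.mul_apply, Fin.sum_univ_two] using hpur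
  have keyC : ((px 0 : ℂ) ^ 2 + (px 1 : ℂ) ^ 2) + ((py 0 : ℂ) ^ 2 + (py 1 : ℂ) ^ 2) +
      ((pz 0 : ℂ) ^ 2 + (pz 1 : ℂ) ^ 2) = 1 + (pur : ℂ) := by
    linear_combination ((px 0 : ℂ) / 2 + (a + b + c + d) / 4) * Ex0 +
      ((px 1 : ℂ) / 2 + (a - b - c + d) / 4) * Ex1 +
      ((py 0 : ℂ) / 2 + (a + d + Complex.I * (b - c)) / 4) * Ey0 +
      ((py 1 : ℂ) / 2 + (a + d - Complex.I * (b - c)) / 4) * Ey1 +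
      ((pz 0 : ℂ) + a) * Ez0 + ((pz 1 : ℂ) + d) * Ez1 + hpurc + (a + d + 1) * htr +
      (((b - c) ^ 2) / 2) * Complex.I_sq
  have key : (px 0 ^ 2 + px 1 ^ 2) + (py 0 ^ 2 + py 1 ^ 2) + (pz 0 ^ 2 + pz 1 ^ 2)
      = 1 + pur := by exact_mod_cast keyC
  have hsx : px 0 + px 1 = 1 := by
    have h : ((px 0 + px 1 : ℝ) : ℂ) = 1 := by
      push_cast
      linear_combination Ex0 / 2 + Ex1 / 2 + htr
    exact_mod_cast h
  have hsy : py 0 + py 1 = 1 := by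
    have h : ((py 0 + py 1 : ℝ) : ℂ) = 1 := by
      push_cast
      linear_combination Ey0 / 2 + Ey1 / 2 + htr
    exact_mod_cast h
  have hsz : pz 0 + pz 1 = 1 := by
    have h : ((pz 0 + pz 1 : ℝ) : ℂ) = 1 := by
      push_cast
      linear_combination Ez0 + Ez1 + htr
    exact_mod_cast h
  have hx : 0 < px 0 ^ 2 + px 1 ^ 2 := by nlinarith [sq_nonneg (px 0 - px 1)]
  have hy : 0 < py 0 ^ 2 + py 1 ^ 2 := by nlinarith [sq_nonneg (py 0 - py 1)]
  have hz : 0 < pz 0 ^ 2 + pz 1 ^ 2 := by nlinarith [sq_nonneg (pz 0 - pz 1)]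
  rw [neg_neg, neg_neg, neg_neg, Real.exp_log hx, Real.exp_log hy, Real.exp_log hz]
  linarith [key]
end

section
/- Let ρ be a 3×3 density matrix and A a 3×3 Hermitian matrix with simple eigenvalues 1, 0, −1 and orthonormal eigenvectors |1⟩, |2⟩, |3⟩ (in that order), and let p_j = ⟨j|ρ|j⟩ with p_j > 0 for all j. Write ⟨X⟩ = Tr[ρX] and V(X) = ⟨X²⟩ − ⟨X⟩². Then: p_1² = [V(A²) + ⟨A³⟩ − ⟨A²⟩⟨A⟩]·[V(A) − V(A²)] / (4·[V(A²) − (⟨A³⟩ − ⟨A²⟩⟨A⟩)]); p_2² = [V(A²)² − (⟨A³⟩ − ⟨A²⟩⟨A⟩)²] / [V(A) − V(A²)]; and p_3² = [V(A²) − (⟨A³⟩ − ⟨A²⟩⟨A⟩)]·[V(A) − V(A²)] / (4·[V(A²) + ⟨A³⟩ − ⟨A²⟩⟨A⟩]). -/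
open Matrix ComplexOrder

/-- The spin-1 probability reconstruction formulas: for an observable `A` with simple
eigenvalues `1, 0, −1` and moments `m_k = ⟨A^k⟩ = Tr[ρ A^k]`, writing
`V(A) = m₂ − m₁²`, `V(A²) = m₄ − m₂²`, `W = ⟨A³⟩ − ⟨A²⟩⟨A⟩ = m₃ − m₂ m₁`, one has
`p₁² = (V(A²)+W)(V(A)−V(A²))/(4(V(A²)−W))`,
`p₂² = (V(A²)² − W²)/(V(A)−V(A²))`,
`p₃² = (V(A²)−W)(V(A)−V(A²))/(4(V(A²)+W))`. -/
theorem spin1_probability_reconstruction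
    (ρ A : Matrix (Fin 3) (Fin 3) ℂ)
    (hρ : ρ.PosSemidef) (hρtr : ρ.trace = 1)
    (v : Fin 3 → Fin 3 → ℂ)
    (hv : ∀ i j, star (v i) ⬝ᵥ v j = if i = j then 1 else 0)
    (hA : A = vecMulVec (v 0) (star (v 0)) - vecMulVec (v 2) (star (v 2)))
    (p : Fin 3 → ℝ)
    (hp : ∀ j, star (v j) ⬝ᵥ ρ *ᵥ v j = (p j : ℂ))
    (hppos : ∀ j, 0 < p j)
    (m1 m2 m3 m4 : ℝ)
    (hm1 : (ρ * A).trace = (m1 : ℂ))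
    (hm2 : (ρ * A ^ 2).trace = (m2 : ℂ))
    (hm3 : (ρ * A ^ 3).trace = (m3 : ℂ))
    (hm4 : (ρ * A ^ 4).trace = (m4 : ℂ)) :
    p 0 ^ 2 = ((m4 - m2 ^ 2) + (m3 - m2 * m1)) * ((m2 - m1 ^ 2) - (m4 - m2 ^ 2)) /
        (4 * ((m4 - m2 ^ 2) - (m3 - m2 * m1))) ∧
    p 1 ^ 2 = ((m4 - m2 ^ 2) ^ 2 - (m3 - m2 * m1) ^ 2) /
        ((m2 - m1 ^ 2) - (m4 - m2 ^ 2)) ∧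
    p 2 ^ 2 = ((m4 - m2 ^ 2) - (m3 - m2 * m1)) * ((m2 - m1 ^ 2) - (m4 - m2 ^ 2)) /
        (4 * ((m4 - m2 ^ 2) + (m3 - m2 * m1))) := by
  set P : Fin 3 → Matrix (Fin 3) (Fin 3) ℂ :=
    fun j => vecMulVec (v j) (star (v j)) with hPdef
  -- projector multiplication
  have key : ∀ i j a b, (P i * P j) a b =
      (star (v i) ⬝ᵥ v j) * (v i a * star (v j) b) := by
    intro i j a b
    simp only [hPdef, Matrix.mul_apply, vecMulVec_apply, dotProduct, Finset.sum_mul,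
      Pi.star_apply]
    exact Finset.sum_congr rfl (fun k _ => by ring)
  have hPmul : ∀ i j, P i * P j = if i = j then P i else 0 := by
    intro i j
    ext a b
    rw [key, hv]
    by_cases h : i = j
    · subst h; simp [hPdef, vecMulVec_apply]
    · simp [h]
  have h00 : P 0 * P 0 = P 0 := by simpa using hPmul 0 0
  have h22 : P 2 * P 2 = P 2 := by simpa using hPmul 2 2
  have h02 : P 0 * P 2 = 0 := by simpa using hPmul 0 2
  have h20 : P 2 * P 0 = 0 := by simpa using hPmul 2 0
  have hA2 : A ^ 2 = P 0 + P 2 := by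
    rw [pow_two, hA]
    show (P 0 - P 2) * (P 0 - P 2) = P 0 + P 2
    simp only [sub_mul, mul_sub, h00, h22, h02, h20]
    abel
  have hA3 : A ^ 3 = A := by
    rw [pow_succ, hA2, hA]
    show (P 0 + P 2) * (P 0 - P 2) = P 0 - P 2
    simp only [add_mul, mul_sub, h00, h22, h02, h20]
    abel
  have hA4 : A ^ 4 = A ^ 2 := by
    have h43 : A ^ 4 = A ^ 3 * A := by rw [pow_succ]
    rw [h43, hA3, ← pow_two]
  -- traces against projectors
  have htr : ∀ j, (ρ * P j).trace = (p j : ℂ) := by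
    intro j
    rw [← hp j]
    simp only [hPdef, Matrix.trace, Matrix.diag, Matrix.mul_apply, vecMulVec_apply,
      dotProduct, mulVec, Pi.star_apply, Finset.mul_sum]
    exact Finset.sum_congr rfl fun i _ => Finset.sum_congr rfl fun k _ => by ring
  -- completeness: P 0 + P 1 + P 2 = 1
  have hUU : (Matrix.of fun a j => v j a)ᴴ * (Matrix.of fun a j => v j a) = 1 := by
    ext i j
    simpa [Matrix.mul_apply, conjTranspose_apply, dotProduct, Matrix.one_apply] using hv i j
  have hUUc : (Matrix.of fun a j => v j a) * (Matrix.of fun a j => v j a)ᴴ = 1 :=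
    mul_eq_one_comm.mp hUU
  have hsum : P 0 + P 1 + P 2 = 1 := by
    rw [← hUUc]
    ext a b
    simp [hPdef, Matrix.mul_apply, vecMulVec_apply, conjTranspose_apply, Fin.sum_univ_three]
  -- p sums to 1
  have hsump : p 0 + p 1 + p 2 = 1 := by
    have h1 : (ρ * (P 0 + P 1 + P 2)).trace = ((p 0 : ℂ)) + p 1 + p 2 := by
      rw [mul_add, mul_add, Matrix.trace_add, Matrix.trace_add, htr 0, htr 1, htr 2]
    rw [hsum, mul_one, hρtr] at h1
    exact_mod_cast h1.symm
  -- moment values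
  have hmA : (ρ * A).trace = ((p 0 : ℂ)) - p 2 := by
    rw [hA]
    show (ρ * (P 0 - P 2)).trace = _
    rw [mul_sub, Matrix.trace_sub, htr 0, htr 2]
  have hmA2 : (ρ * A ^ 2).trace = ((p 0 : ℂ)) + p 2 := by
    rw [hA2, mul_add, Matrix.trace_add, htr 0, htr 2]
  have e1 : m1 = p 0 - p 2 := by
    have := hm1.symm.trans hmA
    exact_mod_cast this
  have e2 : m2 = p 0 + p 2 := by
    have := hm2.symm.trans hmA2
    exact_mod_cast this
  have e3 : m3 = p 0 - p 2 := by
    rw [hA3] at hm3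
    exact_mod_cast hm3.symm.trans hmA
  have e4 : m4 = p 0 + p 2 := by
    rw [hA4] at hm4
    exact_mod_cast hm4.symm.trans hmA2
  -- pure real algebra
  have ha := hppos 0
  have hb := hppos 1
  have hc := hppos 2
  have hb' : p 1 = 1 - p 0 - p 2 := by linarith
  rw [e1, e2, e3, e4, hb']
  set a := p 0
  set c := p 2
  have hbpos : 0 < 1 - a - c := by rw [← hb']; exact hb
  refine ⟨?_, ?_, ?_⟩
  · have hd : 4 * (((a + c) - (a + c) ^ 2) - ((a - c) - (a + c) * (a - c)))
        = 8 * ((1 - a - c) * c) := by ring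
    have hdne : 4 * (((a + c) - (a + c) ^ 2) - ((a - c) - (a + c) * (a - c))) ≠ 0 := by
      rw [hd]; positivity
    rw [eq_div_iff hdne]; ring
  · have hd : ((a + c) - (a - c) ^ 2) - ((a + c) - (a + c) ^ 2) = 4 * (a * c) := by ring
    have hdne : ((a + c) - (a - c) ^ 2) - ((a + c) - (a + c) ^ 2) ≠ 0 := by
      rw [hd]; positivity
    rw [eq_div_iff hdne]; ring
  · have hd : 4 * (((a + c) - (a + c) ^ 2) + ((a - c) - (a + c) * (a - c)))
        = 8 * ((1 - a - c) * a) := by ring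
    have hdne : 4 * (((a + c) - (a + c) ^ 2) + ((a - c) - (a + c) * (a - c))) ≠ 0 := by
      rw [hd]; positivity
    rw [eq_div_iff hdne]; ring
end

section
/- Let ρ be a 3×3 density matrix and let A and B each be 3×3 Hermitian matrices with simple eigenvalues 1, 0, −1, with measurement probabilities (p_1, p_2, p_3) and (q_1, q_2, q_3) in state ρ respectively. Let H₂(A) = −ln(Σ_j p_j²), H₂(B) = −ln(Σ_k q_k²), and V(X) = Tr[ρX²] − (Tr[ρX])². Then for any real constant c, the entropic inequality H₂(A) + H₂(B) ≥ c holds if and only if the variance inequality [2 − V(A) − 3V(A²)] · [2 − V(B) − 3V(B²)] ≤ 4·e^{−c} holds. -/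
open Matrix ComplexOrder

lemma vmv_mul (a b c d : Fin 3 → ℂ) :
    vecMulVec a b * vecMulVec c d = (b ⬝ᵥ c) • vecMulVec a d := by
  ext i j
  simp [mul_apply, vecMulVec_apply, dotProduct, Finset.sum_mul, Finset.mul_sum]
  refine Finset.sum_congr rfl fun k _ => by ring

lemma trace_mul_vmv (ρ : Matrix (Fin 3) (Fin 3) ℂ) (a b : Fin 3 → ℂ) :
    (ρ * vecMulVec a b).trace = b ⬝ᵥ (ρ *ᵥ a) := by
  simp [trace, mul_apply, vecMulVec_apply, dotProduct, mulVec, Finset.mul_sum]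
  refine Finset.sum_congr rfl fun i _ => Finset.sum_congr rfl fun k _ => by ring

lemma vmv_complete (v : Fin 3 → Fin 3 → ℂ)
    (hv : ∀ i j, star (v i) ⬝ᵥ v j = if i = j then 1 else 0) :
    (∑ j, vecMulVec (v j) (star (v j))) = 1 := by
  set U : Matrix (Fin 3) (Fin 3) ℂ := of v with hU
  have hUU : U * Uᴴ = 1 := by
    ext i j
    have := hv j i
    simp only [dotProduct, Pi.star_apply] at this
    simp only [mul_apply, conjTranspose_apply, hU, of_apply, one_apply]
    rw [show (∑ k, v i k * star (v j k)) = ∑ k, star (v j k) * v i k from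
      Finset.sum_congr rfl fun k _ => mul_comm _ _, this]
    by_cases h : i = j <;> simp [h, eq_comm]
  have hU2 : Uᴴ * U = 1 := mul_eq_one_comm.mp hUU
  ext i j
  have h2 := congrFun (congrFun hU2 i) j
  simp only [mul_apply, conjTranspose_apply, hU, of_apply, one_apply] at h2
  have : (∑ k, v k i * star (v k j)) = star (∑ k, star (v k i) * v k j) := by
    simp [Finset.sum_congr, mul_comm]
  simp only [Matrix.sum_apply, vecMulVec_apply, Pi.star_apply, one_apply]
  rw [this, h2]
  by_cases h : i = j <;> simp [h]

lemma key_lemma (ρ A : Matrix (Fin 3) (Fin 3) ℂ) (hρtr : ρ.trace = 1)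
    (v : Fin 3 → Fin 3 → ℂ)
    (hv : ∀ i j, star (v i) ⬝ᵥ v j = if i = j then 1 else 0)
    (hA : A = vecMulVec (v 0) (star (v 0)) - vecMulVec (v 2) (star (v 2)))
    (p : Fin 3 → ℝ) (hp : ∀ j, star (v j) ⬝ᵥ ρ *ᵥ v j = (p j : ℂ))
    (VA VA2 : ℝ)
    (hVA : (ρ * (A * A)).trace - ((ρ * A).trace) ^ 2 = (VA : ℂ))
    (hVA2 : (ρ * ((A * A) * (A * A))).trace - ((ρ * (A * A)).trace) ^ 2 = (VA2 : ℂ)) :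
    2 - VA - 3 * VA2 = 2 * (p 0 ^ 2 + p 1 ^ 2 + p 2 ^ 2) ∧
      p 0 + p 1 + p 2 = 1 := by
  set P0 := vecMulVec (v 0) (star (v 0)) with hP0
  set P2 := vecMulVec (v 2) (star (v 2)) with hP2
  -- A * A = P0 + P2
  have hAA : A * A = P0 + P2 := by
    rw [hA, sub_mul, mul_sub, mul_sub, hP0, hP2, vmv_mul, vmv_mul, vmv_mul, vmv_mul,
      hv 0 0, hv 0 2, hv 2 0, hv 2 2]
    simp
  have hA4 : (A * A) * (A * A) = P0 + P2 := by
    rw [hAA, add_mul, mul_add, mul_add, hP0, hP2, vmv_mul, vmv_mul, vmv_mul, vmv_mul,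
      hv 0 0, hv 0 2, hv 2 0, hv 2 2]
    simp
  -- traces
  have htrA : (ρ * A).trace = (p 0 : ℂ) - p 2 := by
    rw [hA, mul_sub, trace_sub, trace_mul_vmv, trace_mul_vmv, hp 0, hp 2]
  have htrA2 : (ρ * (A * A)).trace = (p 0 : ℂ) + p 2 := by
    rw [hAA, mul_add, trace_add, trace_mul_vmv, trace_mul_vmv, hp 0, hp 2]
  have htrA4 : (ρ * ((A * A) * (A * A))).trace = (p 0 : ℂ) + p 2 := by
    rw [hA4, mul_add, trace_add, trace_mul_vmv, trace_mul_vmv, hp 0, hp 2]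
  -- sum of probabilities is 1
  have hsum : p 0 + p 1 + p 2 = 1 := by
    have h1 : (ρ * ∑ j, vecMulVec (v j) (star (v j))).trace = 1 := by
      rw [vmv_complete v hv, mul_one, hρtr]
    rw [Finset.mul_sum, trace_sum] at h1
    have h2 : ∑ j, (ρ * vecMulVec (v j) (star (v j))).trace
        = ((p 0 : ℂ) + p 1 + p 2) := by
      rw [Fin.sum_univ_three, trace_mul_vmv, trace_mul_vmv, trace_mul_vmv,
        hp 0, hp 1, hp 2]
    rw [h2] at h1
    exact_mod_cast h1
  refine ⟨?_, hsum⟩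
  -- real versions of variance identities
  have hVA' : VA = (p 0 + p 2) - (p 0 - p 2) ^ 2 := by
    have : ((p 0 : ℂ) + p 2) - ((p 0 : ℂ) - p 2) ^ 2 = (VA : ℂ) := by
      rw [← hVA, htrA, htrA2]
    exact_mod_cast this.symm
  have hVA2' : VA2 = (p 0 + p 2) - (p 0 + p 2) ^ 2 := by
    have : ((p 0 : ℂ) + p 2) - ((p 0 : ℂ) + p 2) ^ 2 = (VA2 : ℂ) := by
      rw [← hVA2, htrA4, htrA2]
    exact_mod_cast this.symm
  have hp1 : p 1 = 1 - p 0 - p 2 := by linarith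
  rw [hVA', hVA2', hp1]; ring

/-- Equivalence of the collision-entropy uncertainty relation (26) and the
variance-based uncertainty relation (27) for two spin-1 observables:
`H₂(A) + H₂(B) ≥ c  ↔  [2 − V(A) − 3V(A²)][2 − V(B) − 3V(B²)] ≤ 4 e^{−c}`. -/
theorem spin1_entropic_iff_variance_uncertainty
    (ρ A B : Matrix (Fin 3) (Fin 3) ℂ)
    (hρ : ρ.PosSemidef) (hρtr : ρ.trace = 1)
    (v w : Fin 3 → Fin 3 → ℂ)
    (hv : ∀ i j, star (v i) ⬝ᵥ v j = if i = j then 1 else 0)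
    (hw : ∀ i j, star (w i) ⬝ᵥ w j = if i = j then 1 else 0)
    (hA : A = vecMulVec (v 0) (star (v 0)) - vecMulVec (v 2) (star (v 2)))
    (hB : B = vecMulVec (w 0) (star (w 0)) - vecMulVec (w 2) (star (w 2)))
    (p q : Fin 3 → ℝ)
    (hp : ∀ j, star (v j) ⬝ᵥ ρ *ᵥ v j = (p j : ℂ))
    (hq : ∀ k, star (w k) ⬝ᵥ ρ *ᵥ w k = (q k : ℂ))
    (VA VA2 VB VB2 : ℝ)
    (hVA : (ρ * (A * A)).trace - ((ρ * A).trace) ^ 2 = (VA : ℂ))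
    (hVA2 : (ρ * ((A * A) * (A * A))).trace - ((ρ * (A * A)).trace) ^ 2 = (VA2 : ℂ))
    (hVB : (ρ * (B * B)).trace - ((ρ * B).trace) ^ 2 = (VB : ℂ))
    (hVB2 : (ρ * ((B * B) * (B * B))).trace - ((ρ * (B * B)).trace) ^ 2 = (VB2 : ℂ))
    (c : ℝ) :
    (-Real.log (p 0 ^ 2 + p 1 ^ 2 + p 2 ^ 2) +
       -Real.log (q 0 ^ 2 + q 1 ^ 2 + q 2 ^ 2) ≥ c) ↔
    (2 - VA - 3 * VA2) * (2 - VB - 3 * VB2) ≤ 4 * Real.exp (-c) := by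
  obtain ⟨hEA, hsp⟩ := key_lemma ρ A hρtr v hv hA p hp VA VA2 hVA hVA2
  obtain ⟨hEB, hsq⟩ := key_lemma ρ B hρtr w hw hB q hq VB VB2 hVB hVB2
  set P := p 0 ^ 2 + p 1 ^ 2 + p 2 ^ 2 with hPdef
  set Q := q 0 ^ 2 + q 1 ^ 2 + q 2 ^ 2 with hQdef
  have hP : 0 < P := by nlinarith [sq_nonneg (p 0 - p 1), sq_nonneg (p 0 - p 2), sq_nonneg (p 1 - p 2)]
  have hQ : 0 < Q := by nlinarith [sq_nonneg (q 0 - q 1), sq_nonneg (q 0 - q 2), sq_nonneg (q 1 - q 2)]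
  rw [hEA, hEB]
  have hlog : -Real.log P + -Real.log Q = -Real.log (P * Q) := by
    rw [Real.log_mul hP.ne' hQ.ne']; ring
  rw [hlog]
  constructor
  · intro h
    have h1 : Real.log (P * Q) ≤ -c := by linarith
    have h2 : P * Q ≤ Real.exp (-c) :=
      (Real.log_le_iff_le_exp (mul_pos hP hQ)).mp h1
    nlinarith
  · intro h
    have h2 : P * Q ≤ Real.exp (-c) := by nlinarith
    have h1 : Real.log (P * Q) ≤ -c :=
      (Real.log_le_iff_le_exp (mul_pos hP hQ)).mpr h2
    linarith
end

section
/- Let ρ be a 4×4 density matrix and A a 4×4 Hermitian matrix with simple eigenvalues 3/2, 1/2, −1/2, −3/2 and orthonormal eigenvectors |1⟩, |2⟩, |3⟩, |4⟩, and set p_j = ⟨j|ρ|j⟩. Then, with ⟨X⟩ = Tr[ρX] and V(X) = ⟨X²⟩ − ⟨X⟩², one has p_1² + p_2² + p_3² + p_4² = 1 − [ (5/9)·V(A³) + (1/4)·V(A²) + (365/144)·V(A) − (41/18)·(⟨A⁴⟩ − ⟨A⟩⟨A³⟩) ]. Equivalently, the collision entropy satisfies H₂(A) = −ln(Σ_j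 p_j²) = −ln{1 − [(5/9)V(A³) + (1/4)V(A²) + (365/144)V(A) − (41/18)(⟨A⁴⟩ − ⟨A⟩⟨A³⟩)]}. -/
open Matrix ComplexOrder

/-!
Writing `A = ∑ⱼ λⱼ Pⱼ` with the rank-one projections `Pⱼ = |j⟩⟨j|`, which form a complete family
of orthogonal idempotents, gives `A ^ k = ∑ⱼ λⱼ ^ k Pⱼ`, hence `⟨A ^ k⟩ = ∑ⱼ λⱼ ^ k pⱼ` and
`∑ⱼ pⱼ = Tr ρ = 1`. Both sides of Eq. (31) are then quadratic polynomials in `p₁, …, p₄`, and they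
agree modulo `∑ⱼ pⱼ = 1`.
-/

section SpectralCalculus

variable {R M ι : Type*} [CommSemiring R] [Semiring M] [Algebra R M] [Fintype ι] {e : ι → M}

theorem OrthogonalIdempotents.sum_smul_mul_sum_smul (he : OrthogonalIdempotents e)
    (a b : ι → R) : (∑ i, a i • e i) * (∑ i, b i • e i) = ∑ i, (a i * b i) • e i := by
  classical
  simp [Finset.sum_mul, Finset.mul_sum, he.mul_eq, smul_smul, mul_comm]

theorem CompleteOrthogonalIdempotents.sum_smul_pow (he : CompleteOrthogonalIdempotents e)
    (a : ι → R) (k : ℕ) : (∑ i, a i • e i) ^ k = ∑ i, a i ^ k • e i := by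
  induction k with
  | zero => simp [he.complete]
  | succ k ih =>
    rw [pow_succ, ih, he.toOrthogonalIdempotents.sum_smul_mul_sum_smul]
    simp only [pow_succ]

end SpectralCalculus

namespace Matrix

variable {n R : Type*} [Fintype n]

theorem trace_mul_vecMulVec [CommSemiring R] (ρ : Matrix n n R) (u w : n → R) :
    (ρ * vecMulVec u w).trace = w ⬝ᵥ ρ *ᵥ u := by
  rw [mul_vecMulVec, trace_vecMulVec, dotProduct_comm]

variable [DecidableEq n]

theorem trace_mul_sum_smul_pow [CommSemiring R] {ι : Type*} [Fintype ι] {P : ι → Matrix n n R}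
    (hP : CompleteOrthogonalIdempotents P) (ρ : Matrix n n R) (a : ι → R) (k : ℕ) :
    (ρ * (∑ i, a i • P i) ^ k).trace = ∑ i, a i ^ k * (ρ * P i).trace := by
  simp [hP.sum_smul_pow, Finset.mul_sum, trace_sum, trace_smul]

theorem completeOrthogonalIdempotents_vecMulVec_star [CommRing R] [StarRing R] {v : n → n → R}
    (hv : ∀ i j, star (v i) ⬝ᵥ v j = if i = j then 1 else 0) :
    CompleteOrthogonalIdempotents fun j ↦ vecMulVec (v j) (star (v j)) where
  toOrthogonalIdempotents := by
    refine OrthogonalIdempotents.iff_mul_eq.2 fun i j ↦ ?_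
    rw [vecMulVec_mul_vecMulVec, hv]
    split_ifs with h <;> simp [h]
  complete := by
    let B : Matrix n n R := of fun i j ↦ v j i
    have hB : Bᴴ * B = 1 := by
      ext i j
      simpa [B, mul_apply, dotProduct, one_apply] using hv i j
    calc ∑ j, vecMulVec (v j) (star (v j)) = B * Bᴴ := by
          ext i k
          simp [B, mul_apply, vecMulVec_apply, Matrix.sum_apply]
      _ = 1 := mul_eq_one_comm.1 hB

end Matrix

noncomputable def spin32Eigenvalue : Fin 4 → ℝ := ![3 / 2, 1 / 2, -1 / 2, -3 / 2]

noncomputable def spin32Moment (p : Fin 4 → ℝ) (k : ℕ) : ℝ := ∑ j, spin32Eigenvalue j ^ k * p j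

theorem sum_sq_eq_one_sub_spin32Moment (p : Fin 4 → ℝ) (hp : spin32Moment p 0 = 1) :
    ∑ j, p j ^ 2 = 1 - ((5 / 9) * (spin32Moment p 6 - spin32Moment p 3 ^ 2) +
      (1 / 4) * (spin32Moment p 4 - spin32Moment p 2 ^ 2) +
      (365 / 144) * (spin32Moment p 2 - spin32Moment p 1 ^ 2) -
      (41 / 18) * (spin32Moment p 4 - spin32Moment p 1 * spin32Moment p 3)) := by
  simp only [spin32Moment, spin32Eigenvalue, Fin.sum_univ_four, cons_val_zero, cons_val_one,
    cons_val, pow_zero, one_mul] at hp ⊢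
  linear_combination (1 - 49 / 64 * p 0 + 31 / 64 * p 1 + 31 / 64 * p 2 - 49 / 64 * p 3) * hp

theorem spin32_collision_entropy_from_variances_general
    (ρ A : Matrix (Fin 4) (Fin 4) ℂ)
    (hρtr : ρ.trace = 1)
    (v : Fin 4 → Fin 4 → ℂ)
    (hv : ∀ i j, star (v i) ⬝ᵥ v j = if i = j then 1 else 0)
    (hA : A = (3 / 2 : ℂ) • vecMulVec (v 0) (star (v 0)) +
              (1 / 2 : ℂ) • vecMulVec (v 1) (star (v 1)) -
              (1 / 2 : ℂ) • vecMulVec (v 2) (star (v 2)) -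
              (3 / 2 : ℂ) • vecMulVec (v 3) (star (v 3)))
    (p : Fin 4 → ℝ)
    (hp : ∀ j, star (v j) ⬝ᵥ ρ *ᵥ v j = (p j : ℂ))
    (m1 m2 m3 m4 m6 : ℝ)
    (hm1 : (ρ * A).trace = (m1 : ℂ))
    (hm2 : (ρ * A ^ 2).trace = (m2 : ℂ))
    (hm3 : (ρ * A ^ 3).trace = (m3 : ℂ))
    (hm4 : (ρ * A ^ 4).trace = (m4 : ℂ))
    (hm6 : (ρ * A ^ 6).trace = (m6 : ℂ)) :
    p 0 ^ 2 + p 1 ^ 2 + p 2 ^ 2 + p 3 ^ 2 =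
      1 - ((5 / 9) * (m6 - m3 ^ 2) + (1 / 4) * (m4 - m2 ^ 2) +
        (365 / 144) * (m2 - m1 ^ 2) - (41 / 18) * (m4 - m1 * m3)) ∧
    -Real.log (p 0 ^ 2 + p 1 ^ 2 + p 2 ^ 2 + p 3 ^ 2) =
      -Real.log (1 - ((5 / 9) * (m6 - m3 ^ 2) + (1 / 4) * (m4 - m2 ^ 2) +
        (365 / 144) * (m2 - m1 ^ 2) - (41 / 18) * (m4 - m1 * m3))) := by
  have hA_spectral : A = ∑ j, (spin32Eigenvalue j : ℂ) • vecMulVec (v j) (star (v j)) := by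
    rw [hA]
    simp only [spin32Eigenvalue, Fin.sum_univ_four, cons_val_zero, cons_val_one, cons_val,
      Complex.coe_smul]
    module
  have hmoment (k : ℕ) : (ρ * A ^ k).trace = spin32Moment p k := by
    rw [hA_spectral, trace_mul_sum_smul_pow (completeOrthogonalIdempotents_vecMulVec_star hv),
      spin32Moment]
    simp [trace_mul_vecMulVec, hp]
  have moment_eq {k : ℕ} {m : ℝ} (h : (ρ * A ^ k).trace = m) : m = spin32Moment p k :=
    Complex.ofReal_injective (h.symm.trans (hmoment k))
  have hnorm : spin32Moment p 0 = 1 :=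
    (moment_eq (by rw [pow_zero, mul_one, hρtr, Complex.ofReal_one])).symm
  obtain rfl := moment_eq (k := 1) (by rwa [pow_one])
  obtain rfl := moment_eq hm2
  obtain rfl := moment_eq hm3
  obtain rfl := moment_eq hm4
  obtain rfl := moment_eq hm6
  have key := sum_sq_eq_one_sub_spin32Moment p hnorm
  rw [Fin.sum_univ_four] at key
  exact ⟨key, by rw [key]⟩

/-- Eq. (31): for a spin-3/2 observable `A` (simple eigenvalues `3/2, 1/2, −1/2, −3/2`)
with moments `m_k = ⟨A^k⟩ = Tr[ρ A^k]` (so `V(A) = m₂ − m₁²`, `V(A²) = m₄ − m₂²`,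
`V(A³) = m₆ − m₃²`, `⟨A⁴⟩ − ⟨A⟩⟨A³⟩ = m₄ − m₁ m₃`), one has
`Σ_j p_j² = 1 − [(5/9)V(A³) + (1/4)V(A²) + (365/144)V(A) − (41/18)(⟨A⁴⟩ − ⟨A⟩⟨A³⟩)]`,
equivalently the corresponding formula for the collision entropy `H₂(A)`. -/
theorem spin32_collision_entropy_from_variances
    (ρ A : Matrix (Fin 4) (Fin 4) ℂ)
    (hρ : ρ.PosSemidef) (hρtr : ρ.trace = 1)
    (v : Fin 4 → Fin 4 → ℂ)
    (hv : ∀ i j, star (v i) ⬝ᵥ v j = if i = j then 1 else 0)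
    (hA : A = (3 / 2 : ℂ) • vecMulVec (v 0) (star (v 0)) +
              (1 / 2 : ℂ) • vecMulVec (v 1) (star (v 1)) -
              (1 / 2 : ℂ) • vecMulVec (v 2) (star (v 2)) -
              (3 / 2 : ℂ) • vecMulVec (v 3) (star (v 3)))
    (p : Fin 4 → ℝ)
    (hp : ∀ j, star (v j) ⬝ᵥ ρ *ᵥ v j = (p j : ℂ))
    (m1 m2 m3 m4 m6 : ℝ)
    (hm1 : (ρ * A).trace = (m1 : ℂ))
    (hm2 : (ρ * A ^ 2).trace = (m2 : ℂ))
    (hm3 : (ρ * A ^ 3).trace = (m3 : ℂ))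
    (hm4 : (ρ * A ^ 4).trace = (m4 : ℂ))
    (hm6 : (ρ * A ^ 6).trace = (m6 : ℂ)) :
    p 0 ^ 2 + p 1 ^ 2 + p 2 ^ 2 + p 3 ^ 2 =
      1 - ((5 / 9) * (m6 - m3 ^ 2) + (1 / 4) * (m4 - m2 ^ 2) +
        (365 / 144) * (m2 - m1 ^ 2) - (41 / 18) * (m4 - m1 * m3)) ∧
    -Real.log (p 0 ^ 2 + p 1 ^ 2 + p 2 ^ 2 + p 3 ^ 2) =
      -Real.log (1 - ((5 / 9) * (m6 - m3 ^ 2) + (1 / 4) * (m4 - m2 ^ 2) +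
        (365 / 144) * (m2 - m1 ^ 2) - (41 / 18) * (m4 - m1 * m3))) :=
  spin32_collision_entropy_from_variances_general ρ A hρtr v hv hA p hp m1 m2 m3 m4 m6 hm1 hm2 hm3
    hm4 hm6
end
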